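/- arXiv:2207.12752 — 7 statements merged into one kernel-verified Lean document; each statement's English description precedes it below -/
import Mathlib

section
/- For elements ω₁,…,ω_{2n} of a commutative ring and 0 ≤ j ≤ n, ρ_{n-j}(ω₁,…,ω_{2n}) = Σ over indices 0 ≤ s₁ < t₁ ≤ s₂ < t₂ ≤ ⋯ ≤ s_j < t_j ≤ n of ∏_{k=1}^j ω_{2s_k+1}·ω_{2t_k}. -/
open Finset in
/-- `rho s l`: the sum over all ways of deleting `s` disjoint pairs of consecutive
elements from the sequence `l` of the product of the remaining elements.
(`rho 0 l` is the full product; `rho s l = 0` when `l.length < 2 * s`;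
`rho s []` is `1` if `s = 0` and `0` otherwise.) -/
noncomputable def rho {R : Type*} [CommRing R] (s : ℕ) (l : List R) : R :=
  ∑ S ∈ ((Finset.range (l.length - 1)).powersetCard s).filter
      (fun S => ∀ i ∈ S, i + 1 ∉ S),
    ∏ j ∈ (Finset.range l.length).filter (fun j => j ∉ S ∧ j - 1 ∉ S), l.getD j (0 : R)

/-!
Delete the pairs `(x, x + 1)`, `x ∈ S`, of a term of `ρ_{n-j}(ω₁, …, ω_{2n})` and view them as
dominoes tiling the strip of positions `0, …, 2n - 1` together with `2j` monominoes, the remaining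
positions. Every gap between consecutive monominoes is filled by dominoes, so it has even length:
the `i`-th smallest remaining position has the parity of `i`. Conversely a set of positions with
this parity pattern is the monomino set of exactly one tiling, since in each gap the dominoes start
at the positions of even offset. Finally, a set with this parity pattern is the same thing as a
strictly increasing sequence `2 s₁ < 2 t₁ - 1 < 2 s₂ < 2 t₂ - 1 < ⋯`, that is, as interleaved
indices `s₁ < t₁ ≤ s₂ < ⋯ < t_j ≤ n`, and the remaining product is `∏ ω_{2sₖ+1} ω_{2tₖ}`.
-/

open Finset

namespace Rho

def countBelow (A : Finset ℕ) (i : ℕ) : ℕ := #{a ∈ A | a < i}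

lemma countBelow_zero (A : Finset ℕ) : countBelow A 0 = 0 := by
  simp [countBelow]

lemma countBelow_succ (A : Finset ℕ) (i : ℕ) :
    countBelow A (i + 1) = countBelow A i + if i ∈ A then 1 else 0 := by
  simp only [countBelow, Nat.lt_succ_iff_lt_or_eq, filter_or, filter_eq']
  split_ifs with hi
  · rw [card_union_of_disjoint (by simp), card_singleton]
  · simp

lemma countBelow_of_subset_range {A : Finset ℕ} {i : ℕ} (h : A ⊆ range i) :
    countBelow A i = #A := by
  rw [countBelow, filter_true_of_mem fun a ha => mem_range.mp (h ha)]

lemma countBelow_image_of_strictMono {N : ℕ} {f : Fin N → ℕ} (hf : StrictMono f) (m : Fin N) :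
    countBelow (univ.image f) (f m) = m := by
  rw [countBelow, filter_image, card_image_of_injective _ hf.injective]
  simp only [hf.lt_iff_lt]
  simpa using Fin.card_filter_val_lt (n := N) (m := m)

def remaining (S : Finset ℕ) (m : ℕ) : Finset ℕ := {x ∈ range m | x ∉ S ∧ x - 1 ∉ S}

lemma mem_remaining {S : Finset ℕ} {m x : ℕ} :
    x ∈ remaining S m ↔ x < m ∧ x ∉ S ∧ x - 1 ∉ S := by
  simp [remaining]

lemma remaining_subset_range (S : Finset ℕ) (m : ℕ) : remaining S m ⊆ range m :=
  filter_subset _ _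

/-- The `i`-th smallest element of `A`, counting from `0`, has the parity of `i`. -/
def AlternatesParity (A : Finset ℕ) : Prop := ∀ a ∈ A, countBelow A a % 2 = a % 2

instance (A : Finset ℕ) : Decidable (AlternatesParity A) :=
  inferInstanceAs (Decidable (∀ a ∈ A, _))

/-- The first cells of the dominoes of the tiling whose monominoes are the elements of `A`. -/
def dominoStarts (A : Finset ℕ) (m : ℕ) : Finset ℕ :=
  {x ∈ range m | x ∉ A ∧ (x + countBelow A x) % 2 = 0}

lemma mem_dominoStarts {A : Finset ℕ} {m x : ℕ} :
    x ∈ dominoStarts A m ↔ x < m ∧ x ∉ A ∧ (x + countBelow A x) % 2 = 0 := by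
  simp [dominoStarts]

lemma dominoStarts_noConsecutive (A : Finset ℕ) (m : ℕ) :
    ∀ x ∈ dominoStarts A m, x + 1 ∉ dominoStarts A m := by
  intro x hx hx1
  obtain ⟨-, hxA, hpar⟩ := mem_dominoStarts.mp hx
  obtain ⟨-, -, hpar1⟩ := mem_dominoStarts.mp hx1
  rw [countBelow_succ, if_neg hxA] at hpar1
  omega

section NoConsecutive

variable {S : Finset ℕ} (hS : ∀ x ∈ S, x + 1 ∉ S)
include hS

/-- Each domino below `i` covers two positions below `i`, except one starting at `i - 1`. -/
lemma countBelow_remaining_add {m i : ℕ} (hi : i ≤ m) :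
    countBelow (remaining S m) i + 2 * countBelow S i =
      i + if 0 < i ∧ i - 1 ∈ S then 1 else 0 := by
  induction i with
  | zero => simp [countBelow_zero]
  | succ i ih =>
    have hcons : 0 < i → i - 1 ∈ S → i ∉ S := fun hi h => by
      simpa [Nat.sub_add_cancel hi] using hS _ h
    have := ih (by omega)
    simp only [countBelow_succ, mem_remaining]
    by_cases h0 : 0 < i <;> by_cases h1 : i ∈ S <;> by_cases h2 : i - 1 ∈ S <;>
      simp_all <;> omega

lemma card_remaining_add {m : ℕ} (hSm : S ⊆ range (m - 1)) :
    #(remaining S m) + 2 * #S = m := by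
  have h := countBelow_remaining_add hS (le_refl m)
  rwa [countBelow_of_subset_range (remaining_subset_range S m),
    countBelow_of_subset_range (hSm.trans (range_subset_range.mpr (Nat.sub_le m 1))),
    if_neg fun h => by simpa using mem_range.mp (hSm h.2)] at h

lemma alternatesParity_remaining (m : ℕ) : AlternatesParity (remaining S m) := by
  intro r hr
  obtain ⟨hrm, -, hr1⟩ := mem_remaining.mp hr
  have h := countBelow_remaining_add hS hrm.le
  rw [if_neg fun h => hr1 h.2] at h
  omega

lemma dominoStarts_remaining {m : ℕ} (hSm : S ⊆ range (m - 1)) :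
    dominoStarts (remaining S m) (m - 1) = S := by
  ext x
  have h := countBelow_remaining_add hS (i := x) (m := m)
  simp only [mem_dominoStarts, mem_remaining]
  constructor
  · rintro ⟨hxm, hxr, hpar⟩
    by_contra hxS
    have hx1 : x - 1 ∈ S := by
      by_contra hx1
      exact hxr ⟨by omega, hxS, hx1⟩
    have hx0 : 0 < x := Nat.pos_of_ne_zero (by rintro rfl; exact hxS hx1)
    rw [if_pos ⟨hx0, hx1⟩] at h
    have := h (by omega)
    omega
  · intro hxS
    have hxm := mem_range.mp (hSm hxS)
    refine ⟨hxm, fun hxr => hxr.2.1 hxS, ?_⟩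
    have hx1 : ¬(0 < x ∧ x - 1 ∈ S) := fun hx =>
      hS _ hx.2 (by rwa [Nat.sub_add_cancel hx.1])
    rw [if_neg hx1] at h
    have := h (by omega)
    omega

end NoConsecutive

lemma remaining_dominoStarts {A : Finset ℕ} {m : ℕ} (hAm : A ⊆ range m)
    (hcard : #A % 2 = m % 2) (hA : AlternatesParity A) :
    remaining (dominoStarts A (m - 1)) m = A := by
  ext x
  have hstep : 0 < x → countBelow A x = countBelow A (x - 1) + if x - 1 ∈ A then 1 else 0 :=
    fun hx => by rw [← countBelow_succ, Nat.sub_add_cancel hx]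
  simp only [mem_remaining, mem_dominoStarts, not_and]
  constructor
  · rintro ⟨hxm, hxD, hx1D⟩
    by_contra hxA
    by_cases hpar : (x + countBelow A x) % 2 = 0
    · have hx : x + 1 = m := by by_contra; exact hxD (by omega) hxA hpar
      have := countBelow_succ A x
      rw [if_neg hxA, hx, countBelow_of_subset_range hAm] at this
      omega
    · have hx0 : 0 < x := Nat.pos_of_ne_zero (by rintro rfl; simp [countBelow_zero] at hpar)
      have hx1A : x - 1 ∉ A := fun h => by
        have := hA _ h
        rw [hstep hx0, if_pos h] at hpar
        omega
      have := hx1D (by omega) hx1A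
      rw [hstep hx0, if_neg hx1A] at hpar
      omega
  · intro hxA
    refine ⟨mem_range.mp (hAm hxA), fun _ h => (h hxA).elim, fun _ hx1A => ?_⟩
    rcases Nat.eq_zero_or_pos x with rfl | hx0
    · exact (hx1A hxA).elim
    · have := hA x hxA
      rw [hstep hx0, if_neg hx1A] at this
      omega

theorem sum_remaining_eq {M : Type*} [AddCommMonoid M] {m k s : ℕ} (hmks : k + 2 * s = m)
    (F : Finset ℕ → M) :
    ∑ S ∈ {S ∈ (range (m - 1)).powersetCard s | ∀ x ∈ S, x + 1 ∉ S}, F (remaining S m) =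
      ∑ A ∈ {A ∈ (range m).powersetCard k | AlternatesParity A}, F A := by
  refine sum_nbij' (remaining · m) (dominoStarts · (m - 1)) ?_ ?_ ?_ ?_ fun _ _ => rfl
  · intro S hS
    simp only [mem_filter, mem_powersetCard] at hS ⊢
    obtain ⟨⟨hSm, rfl⟩, hS⟩ := hS
    have := card_remaining_add hS hSm
    exact ⟨⟨remaining_subset_range S m, by omega⟩, alternatesParity_remaining hS m⟩
  · intro A hA
    simp only [mem_filter, mem_powersetCard] at hA ⊢
    obtain ⟨⟨hAm, rfl⟩, hA⟩ := hA
    have hD := card_remaining_add (dominoStarts_noConsecutive A (m - 1)) (filter_subset _ _)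
    rw [remaining_dominoStarts hAm (by omega) hA] at hD
    exact ⟨⟨filter_subset _ _, by omega⟩, dominoStarts_noConsecutive A (m - 1)⟩
  · intro S hS
    simp only [mem_filter, mem_powersetCard] at hS
    exact dominoStarts_remaining hS.2 hS.1.1
  · intro A hA
    simp only [mem_filter, mem_powersetCard] at hA
    exact remaining_dominoStarts hA.1.1 (by omega) hA.2

lemma fin_strictMono_of_lt_succ {α : Type*} [Preorder α] {N : ℕ} {f : Fin N → α}
    (hf : ∀ a b : Fin N, (b : ℕ) = a + 1 → f a < f b) : StrictMono f := by
  cases N with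
  | zero => exact fun a => a.elim0
  | succ N => exact Fin.strictMono_iff_lt_succ.mpr fun i => hf _ _ (by simp)

lemma divNat_finProdFinEquiv {a b : ℕ} (x : Fin a × Fin b) :
    (finProdFinEquiv x).divNat = x.1 :=
  congrArg Prod.fst (finProdFinEquiv.symm_apply_apply x)

section Interleave

variable {n j : ℕ}

def interleavedPairs (n j : ℕ) : Finset ((Fin j → Fin (n + 1)) × (Fin j → Fin (n + 1))) :=
  {p | (∀ k : Fin j, (p.1 k : ℕ) < (p.2 k : ℕ)) ∧
    ∀ (k : Fin j) (h : (k : ℕ) + 1 < j), (p.2 k : ℕ) ≤ (p.1 ⟨(k : ℕ) + 1, h⟩ : ℕ)}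

/-- The `0`-based positions of the factors `ω_{2sₖ+1}, ω_{2tₖ}`, listed as
`2 s₀, 2 t₀ - 1, 2 s₁, …`; indexing by `Fin (j * 2)` lets `finProdFinEquiv` split an index into `(k, 0)`, `(k, 1)`. -/
def interleave (p : (Fin j → Fin (n + 1)) × (Fin j → Fin (n + 1))) (m : Fin (j * 2)) : ℕ :=
  if (m : ℕ) % 2 = 0 then 2 * p.1 m.divNat else 2 * p.2 m.divNat - 1

variable {p q : (Fin j → Fin (n + 1)) × (Fin j → Fin (n + 1))}

lemma interleave_finProdFinEquiv_zero (k : Fin j) :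
    interleave p (finProdFinEquiv (k, 0)) = 2 * p.1 k := by
  simp [interleave, divNat_finProdFinEquiv]

lemma interleave_finProdFinEquiv_one (k : Fin j) :
    interleave p (finProdFinEquiv (k, 1)) = 2 * p.2 k - 1 := by
  simp [interleave, divNat_finProdFinEquiv]

lemma mem_interleavedPairs :
    p ∈ interleavedPairs n j ↔ (∀ k : Fin j, (p.1 k : ℕ) < (p.2 k : ℕ)) ∧
      ∀ (k : Fin j) (h : (k : ℕ) + 1 < j), (p.2 k : ℕ) ≤ (p.1 ⟨(k : ℕ) + 1, h⟩ : ℕ) := by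
  simp [interleavedPairs]

lemma mem_interleavedPairs_iff_strictMono :
    p ∈ interleavedPairs n j ↔ StrictMono (interleave p) := by
  rw [mem_interleavedPairs]
  constructor
  · rintro ⟨hlt, hle⟩
    refine fin_strictMono_of_lt_succ fun a b hab => ?_
    unfold interleave
    by_cases ha : (a : ℕ) % 2 = 0
    · have hb : b.divNat = a.divNat := Fin.ext (by simp only [Fin.coe_divNat]; omega)
      rw [if_pos ha, if_neg (by omega), hb]
      have := hlt a.divNat
      omega
    · have h : (a.divNat : ℕ) + 1 < j := by have := b.isLt; simp only [Fin.coe_divNat]; omega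
      have hb : b.divNat = ⟨a.divNat + 1, h⟩ := Fin.ext (by simp only [Fin.coe_divNat]; omega)
      rw [if_neg ha, if_pos (by omega), hb]
      have := hle a.divNat h
      have := hlt a.divNat
      omega
  · intro hmono
    refine ⟨fun k => ?_, fun k h => ?_⟩
    · have := hmono (show finProdFinEquiv (k, 0) < finProdFinEquiv (k, 1) by
        simp [Fin.lt_def])
      rw [interleave_finProdFinEquiv_zero, interleave_finProdFinEquiv_one] at this
      omega
    · have := hmono (show finProdFinEquiv (k, 1) < finProdFinEquiv (⟨k + 1, h⟩, 0) by
        simp [Fin.lt_def]; omega)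
      rw [interleave_finProdFinEquiv_zero, interleave_finProdFinEquiv_one] at this
      omega

lemma interleave_injOn : Set.InjOn interleave (SetLike.coe (interleavedPairs n j)) := by
  intro p hp q hq h
  have hp := (mem_interleavedPairs.mp hp).1
  have hq := (mem_interleavedPairs.mp hq).1
  refine Prod.ext (funext fun k => Fin.ext ?_) (funext fun k => Fin.ext ?_)
  · have := congrFun h (finProdFinEquiv (k, 0))
    simp only [interleave_finProdFinEquiv_zero] at this
    omega
  · have := congrFun h (finProdFinEquiv (k, 1))
    simp only [interleave_finProdFinEquiv_one] at this
    have := hp k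
    have := hq k
    omega

lemma interleave_mod_two (hp : p ∈ interleavedPairs n j) (m : Fin (j * 2)) :
    interleave p m % 2 = m % 2 := by
  have := (mem_interleavedPairs.mp hp).1 m.divNat
  unfold interleave
  split_ifs <;> omega

lemma interleave_lt (hp : p ∈ interleavedPairs n j) (m : Fin (j * 2)) :
    interleave p m < 2 * n := by
  have := (mem_interleavedPairs.mp hp).1 m.divNat
  have := (p.2 m.divNat).isLt
  unfold interleave
  split_ifs <;> omega

lemma prod_image_interleave {M : Type*} [CommMonoid M] (hp : p ∈ interleavedPairs n j)
    (g : ℕ → M) :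
    ∏ a ∈ univ.image (interleave p), g a = ∏ k, g (2 * p.1 k) * g (2 * p.2 k - 1) := by
  rw [prod_image (mem_interleavedPairs_iff_strictMono.mp hp).injective.injOn,
    ← finProdFinEquiv.prod_comp, Fintype.prod_prod_type]
  simp only [Fin.prod_univ_two, interleave_finProdFinEquiv_zero, interleave_finProdFinEquiv_one]

lemma card_image_interleave (hp : p ∈ interleavedPairs n j) :
    #(univ.image (interleave p)) = j * 2 := by
  rw [card_image_of_injective _ (mem_interleavedPairs_iff_strictMono.mp hp).injective,
    card_univ, Fintype.card_fin]

lemma image_interleave_mem (hp : p ∈ interleavedPairs n j) :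
    univ.image (interleave p) ∈
      {A ∈ (range (2 * n)).powersetCard (j * 2) | AlternatesParity A} := by
  have hmono := mem_interleavedPairs_iff_strictMono.mp hp
  simp only [mem_filter, mem_powersetCard]
  refine ⟨⟨fun a ha => ?_, card_image_interleave hp⟩, fun a ha => ?_⟩
  · obtain ⟨m, -, rfl⟩ := mem_image.mp ha
    exact mem_range.mpr (interleave_lt hp m)
  · obtain ⟨m, -, rfl⟩ := mem_image.mp ha
    rw [countBelow_image_of_strictMono hmono, interleave_mod_two hp]

lemma interleave_eq_orderEmbOfFin {A : Finset ℕ} (hp : p ∈ interleavedPairs n j)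
    (hA : univ.image (interleave p) = A) (hcard : #A = j * 2) :
    interleave p = A.orderEmbOfFin hcard :=
  orderEmbOfFin_unique hcard (fun m => hA ▸ mem_image_of_mem _ (mem_univ m))
    (mem_interleavedPairs_iff_strictMono.mp hp)

lemma exists_interleave_eq_orderEmbOfFin {A : Finset ℕ} (hAn : A ⊆ range (2 * n))
    (hcard : #A = j * 2) (hA : AlternatesParity A) :
    ∃ p ∈ interleavedPairs n j, interleave p = A.orderEmbOfFin hcard := by
  set e := A.orderEmbOfFin hcard
  have he_mod (m : Fin (j * 2)) : e m % 2 = m % 2 := by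
    have := countBelow_image_of_strictMono e.strictMono m
    rw [image_orderEmbOfFin_univ] at this
    rw [← hA _ (orderEmbOfFin_mem A hcard m), this]
  have he_lt (m : Fin (j * 2)) : e m < 2 * n := mem_range.mp (hAn (orderEmbOfFin_mem A hcard m))
  let p : (Fin j → Fin (n + 1)) × (Fin j → Fin (n + 1)) :=
    (fun k => ⟨e (finProdFinEquiv (k, 0)) / 2, by have := he_lt (finProdFinEquiv (k, 0)); omega⟩,
     fun k => ⟨(e (finProdFinEquiv (k, 1)) + 1) / 2,
       by have := he_lt (finProdFinEquiv (k, 1)); omega⟩)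
  have hpe : interleave p = e := by
    funext m
    have hm := he_mod m
    unfold interleave
    split_ifs with h
    · have : finProdFinEquiv (m.divNat, 0) = m := Fin.ext (by simp; omega)
      simp only [p, this]
      omega
    · have : finProdFinEquiv (m.divNat, 1) = m := Fin.ext (by simp; omega)
      simp only [p, this]
      omega
  exact ⟨p, mem_interleavedPairs_iff_strictMono.mpr (hpe ▸ e.strictMono), hpe⟩

theorem sum_image_interleave {M : Type*} [AddCommMonoid M] (F : Finset ℕ → M) :
    ∑ p ∈ interleavedPairs n j, F (univ.image (interleave p)) =
      ∑ A ∈ {A ∈ (range (2 * n)).powersetCard (j * 2) | AlternatesParity A}, F A := by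
  refine sum_nbij (fun p => univ.image (interleave p)) (fun p hp => image_interleave_mem hp)
    (fun p hp q hq hpq => interleave_injOn hp hq ?_) (fun A hA => ?_) fun _ _ => rfl
  · have hcard := card_image_interleave hp
    exact (interleave_eq_orderEmbOfFin hp rfl hcard).trans
      (interleave_eq_orderEmbOfFin hq hpq.symm hcard).symm
  · rw [mem_coe, mem_filter, mem_powersetCard] at hA
    obtain ⟨⟨hAn, hcard⟩, hA⟩ := hA
    obtain ⟨p, hp, hpe⟩ := exists_interleave_eq_orderEmbOfFin hAn hcard hA
    exact ⟨p, hp, by simp only [hpe, image_orderEmbOfFin_univ]⟩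

end Interleave

end Rho

/-- Identity (4): for a sequence `w = (ω₁, …, ω_{2n})` of length `2n` and `0 ≤ j ≤ n`,
`ρ_{n-j}(ω₁,…,ω_{2n})` equals the sum over all `0 ≤ s₁ < t₁ ≤ s₂ < t₂ ≤ ⋯ ≤ s_j < t_j ≤ n`
of `∏_{k=1}^{j} ω_{2 s_k + 1} · ω_{2 t_k}` (1-indexed entries of `w`). -/
theorem rho_even_interleaved_sum {R : Type*} [CommRing R] (n j : ℕ) (hj : j ≤ n)
    (w : List R) (hw : w.length = 2 * n) :
    rho (n - j) w =
      ∑ p ∈ (Finset.univ :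
          Finset ((Fin j → Fin (n + 1)) × (Fin j → Fin (n + 1)))).filter
          (fun p => (∀ k : Fin j, (p.1 k : ℕ) < (p.2 k : ℕ)) ∧
            ∀ (k : Fin j) (h : (k : ℕ) + 1 < j), (p.2 k : ℕ) ≤ (p.1 ⟨(k : ℕ) + 1, h⟩ : ℕ)),
        ∏ k : Fin j,
          w.getD (2 * (p.1 k : ℕ)) (0 : R) * w.getD (2 * (p.2 k : ℕ) - 1) (0 : R) := by
  calc rho (n - j) w
      = ∑ S ∈ {S ∈ (range (2 * n - 1)).powersetCard (n - j) | ∀ x ∈ S, x + 1 ∉ S},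
          ∏ x ∈ Rho.remaining S (2 * n), w.getD x 0 := by rw [rho, hw]; rfl
    _ = ∑ A ∈ {A ∈ (range (2 * n)).powersetCard (j * 2) | Rho.AlternatesParity A},
          ∏ a ∈ A, w.getD a 0 := Rho.sum_remaining_eq (by omega) fun A => ∏ a ∈ A, w.getD a 0
    _ = ∑ p ∈ Rho.interleavedPairs n j, ∏ a ∈ univ.image (Rho.interleave p), w.getD a 0 :=
          (Rho.sum_image_interleave fun A => ∏ a ∈ A, w.getD a 0).symm
    _ = _ := sum_congr rfl fun p hp => Rho.prod_image_interleave hp _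
end

section
/- Let q be a prime power, k ≥ 3, and consider the bipartite graph Λ_{k,q}. Given a backtrackless walk [l⁽¹⁾]⟨r⁽¹⁾⟩[l⁽²⁾]⟨r⁽²⁾⟩… in Λ_{k,q} starting with the all-zero vectors [l⁽¹⁾] = 0 and ⟨r⁽¹⁾⟩ = 0, with color differences u_i = x_{i+1} − x_i (first entries of the left vertices) and v_i = y_{i+1} − y_i (first entries of the right vertices), for all i ≥ 1 and j ≥ 0 one has: l⁽ⁱ⁺¹⁾_{4j} = ρ_{i−j−1}(u₁,v₁,…,u_{i−1},v_{i−1},u_i), l⁽ⁱ⁺¹⁾_{4j+1} = ρ_{i−j−2}(v₁,u₂,…,v_{i−1},u_i), l⁽ⁱ⁺¹⁾_{4j+2} = y_{i+1}·l⁽ⁱ⁺¹⁾_{4j} − ρ_{i−j−1}(u₁,v₁,…,u_i,v_i), and l⁽ⁱ⁺¹⁾_{4j+3} = y_{i+1}·l⁽ⁱ⁺¹⁾_{4j+1} − ρ_{i−j−2}(v₁,u₂,…,v_{i−1},u_i,v_i). -/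
/-- `rhoZ` extends `rho` to integer indices, with the convention `rho s = 0` for `s < 0`. -/
noncomputable def rhoZ {R : Type*} [CommRing R] (s : ℤ) (l : List R) : R :=
  if s < 0 then 0 else rho s.toNat l

/-- Vertices of one side of the graph `Λ(k,q)`: tuples of `k+1` elements of `F`,
modelled as functions `ℕ → F` vanishing above index `k`. -/
abbrev PVec (F : Type*) [Zero F] (k : ℕ) : Type _ := {f : ℕ → F // ∀ i, k < i → f i = 0}

/-- Adjacency condition between a left vertex `[l]` (with `l 1 = l 2`) and a right
vertex `⟨r⟩` (with `r 1 = 0`) in `Λ(k,q)`: for `2 ≤ i ≤ k`,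
`l i + r i = r 0 * l (i-2)` if `i ≡ 2, 3 (mod 4)` and
`l i + r i = l 0 * r (i-2)` if `i ≡ 0, 1 (mod 4)`. -/
def lamAdjLR {F : Type*} [Field F] (k : ℕ) (l r : ℕ → F) : Prop :=
  l 1 = l 2 ∧ r 1 = 0 ∧ ∀ i, 2 ≤ i → i ≤ k →
    ((i % 4 = 2 ∨ i % 4 = 3) → l i + r i = r 0 * l (i - 2)) ∧
    ((i % 4 = 0 ∨ i % 4 = 1) → l i + r i = l 0 * r (i - 2))

/-- The bipartite graph `Λ(k,q)` (the graph `Λ_{k,q}` of the paper, isomorphic to `D(k,q)`). -/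
def LambdaGraph (F : Type*) [Field F] (k : ℕ) : SimpleGraph (PVec F k ⊕ PVec F k) where
  Adj x y := match x, y with
    | Sum.inl l, Sum.inr r => lamAdjLR k l.1 r.1
    | Sum.inr r, Sum.inl l => lamAdjLR k l.1 r.1
    | _, _ => False
  symm := ⟨by rintro (l | r) (l' | r') h <;> exact h⟩
  loopless := ⟨by rintro (l | r) h <;> exact h⟩

/-- The sequence `u 1, v 1, u 2, v 2, …, u (i-1), v (i-1), u i` (length `2i - 1`). -/
def listA {F : Type*} (u v : ℕ → F) (i : ℕ) : List F :=
  List.ofFn (n := 2 * i - 1) fun m =>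
    if (m : ℕ) % 2 = 0 then u ((m : ℕ) / 2 + 1) else v ((m : ℕ) / 2 + 1)

/-- The sequence `v 1, u 2, v 2, …, v (i-1), u i` (length `2i - 2`). -/
def listB {F : Type*} (u v : ℕ → F) (i : ℕ) : List F :=
  List.ofFn (n := 2 * i - 2) fun m =>
    if (m : ℕ) % 2 = 0 then v ((m : ℕ) / 2 + 1) else u ((m : ℕ) / 2 + 2)

/-- The sequence `u 1, v 1, u 2, v 2, …, u i, v i` (length `2i`). -/
def listC {F : Type*} (u v : ℕ → F) (i : ℕ) : List F :=
  List.ofFn (n := 2 * i) fun m =>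
    if (m : ℕ) % 2 = 0 then u ((m : ℕ) / 2 + 1) else v ((m : ℕ) / 2 + 1)

/-- The sequence `v 1, u 2, v 2, …, v (i-1), u i, v i` (length `2i - 1`). -/
def listD {F : Type*} (u v : ℕ → F) (i : ℕ) : List F :=
  List.ofFn (n := 2 * i - 1) fun m =>
    if (m : ℕ) % 2 = 0 then v ((m : ℕ) / 2 + 1) else u ((m : ℕ) / 2 + 2)

/-! Deleting a pair that involves the last term shows that `rho` satisfies
`rho_s(a₁, …, a_{n+2}) = a_{n+2} · rho_s(a₁, …, a_{n+1}) + rho_{s-1}(a₁, …, a_n)`.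
Along the walk, two vertices with a common neighbour differ in coordinate `e` by their colour
difference times coordinate `e - 2` of that neighbour. With the interleaved sequence
`u₁, v₁, u₂, v₂, …` these are the same recurrence, so induction along the walk gives the
coordinates `4j, 4j+1` of the left and `4j+2, 4j+3` of the right vertices; adjacency of
`[l⁽ⁱ⁺¹⁾]` and `⟨r⁽ⁱ⁺¹⁾⟩` then gives the remaining left coordinates. The cases `j = 0` start
from the colours, which are partial sums of the `u_t`, `v_t`, and, for coordinate 1, from
`l₁ = l₂` together with the identity
`rho_{i-1}(v₁, u₂, …, u_{i+1}) + rho_i(u₁, v₁, …, v_{i+1}) = (u₁ + ⋯ + u_{i+1})(v₁ + ⋯ + v_{i+1})`. -/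

open Finset

section PairDeletions

/-- The index sets of `rho`: `S` marks the deletion of the pairs `(i, i + 1)`, `i ∈ S`. -/
def pairDeletions (m s : ℕ) : Finset (Finset ℕ) :=
  ((range m).powersetCard s).filter fun S => ∀ i ∈ S, i + 1 ∉ S

def survivors (n : ℕ) (S : Finset ℕ) : Finset ℕ :=
  (range n).filter fun j => j ∉ S ∧ j - 1 ∉ S

theorem mem_pairDeletions {m s : ℕ} {S : Finset ℕ} :
    S ∈ pairDeletions m s ↔ (S ⊆ range m ∧ S.card = s) ∧ ∀ i ∈ S, i + 1 ∉ S := by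
  simp [pairDeletions, mem_powersetCard]

theorem two_mul_card_le_of_add_one_notMem {S : Finset ℕ} {m : ℕ} (hS : S ⊆ range m)
    (h : ∀ i ∈ S, i + 1 ∉ S) : 2 * S.card ≤ m + 1 := by
  have hdisj : Disjoint S (S.image (· + 1)) := by
    simpa [disjoint_right] using fun i hi => h i hi
  have hsub : S ∪ S.image (· + 1) ⊆ range (m + 1) := by
    intro x hx
    simp only [mem_union, mem_image] at hx
    rcases hx with hx | ⟨i, hi, rfl⟩
    · exact mem_range.2 (by have := mem_range.1 (hS hx); omega)
    · exact mem_range.2 (by have := mem_range.1 (hS hi); omega)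
  have := card_le_card hsub
  rw [card_union_of_disjoint hdisj, card_image_of_injective _ (add_left_injective 1),
    card_range] at this
  omega

theorem notMem_of_mem_pairDeletions {m s x : ℕ} {T : Finset ℕ} (hT : T ∈ pairDeletions m s)
    (hx : m ≤ x) : x ∉ T :=
  fun h => by have := mem_range.1 ((mem_pairDeletions.1 hT).1.1 h); omega

theorem filter_notMem_pairDeletions (m s : ℕ) :
    (pairDeletions (m + 1) s).filter (m ∉ ·) = pairDeletions m s := by
  ext S
  simp only [mem_filter, mem_pairDeletions, range_add_one]
  constructor
  · rintro ⟨⟨⟨hsub, hcard⟩, hcons⟩, hm⟩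
    exact ⟨⟨(subset_insert_iff_of_notMem hm).1 hsub, hcard⟩, hcons⟩
  · rintro ⟨⟨hsub, hcard⟩, hcons⟩
    exact ⟨⟨⟨hsub.trans (subset_insert _ _), hcard⟩, hcons⟩, fun h => by simpa using hsub h⟩

theorem mem_filter_mem_pairDeletions {n s : ℕ} {S : Finset ℕ} :
    S ∈ (pairDeletions (n + 1) (s + 1)).filter (n ∈ ·) ↔
      n ∈ S ∧ S.erase n ∈ pairDeletions (n - 1) s := by
  simp only [mem_filter, mem_pairDeletions, subset_iff, mem_range, mem_erase]
  constructor
  · rintro ⟨⟨⟨hsub, hcard⟩, hcons⟩, hn⟩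
    refine ⟨hn, ⟨fun x ⟨hxn, hx⟩ => ?_, by rw [card_erase_of_mem hn, hcard, Nat.add_sub_cancel]⟩,
      fun i hi h => hcons i hi.2 h.2⟩
    have := hsub hx
    have : x + 1 ≠ n := fun h => hcons x hx (h ▸ hn)
    omega
  · rintro ⟨hn, ⟨hsub, hcard⟩, hcons⟩
    have hlt : ∀ x ∈ S, x ≠ n → x + 1 < n := fun x hx hxn => by have := hsub ⟨hxn, hx⟩; omega
    refine ⟨⟨⟨fun x hx => ?_, ?_⟩, fun i hi h => ?_⟩, hn⟩
    · rcases eq_or_ne x n with rfl | hxn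
      · omega
      · have := hlt x hx hxn; omega
    · rw [← card_erase_add_one hn, hcard]
    · rcases eq_or_ne i n with rfl | hin
      · have := hlt _ h (by omega); omega
      · exact hcons i ⟨hin, hi⟩ ⟨by have := hlt i hi hin; omega, h⟩

theorem survivors_succ {m : ℕ} {S : Finset ℕ} (h : m ∉ S ∧ m - 1 ∉ S) :
    survivors (m + 1) S = insert m (survivors m S) := by
  rw [survivors, range_add_one, filter_insert, if_pos h, survivors]

theorem survivors_add_two_insert {n : ℕ} {T : Finset ℕ} (hT : T ⊆ range (n - 1)) :
    survivors (n + 2) (insert n T) = survivors n T := by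
  have hlt : ∀ x ∈ T, x + 1 < n := fun x hx => by have := mem_range.1 (hT hx); omega
  rw [survivors, range_add_one, range_add_one, filter_insert, filter_insert,
    if_neg (by simp), if_neg (by simp), survivors]
  refine filter_congr fun j hj => ?_
  have := mem_range.1 hj
  simp only [mem_insert, show j ≠ n by omega, show j - 1 ≠ n by omega, false_or]

end PairDeletions

section SeqRho

variable {R : Type*} [CommRing R]

def seqRho (s n : ℕ) (f : ℕ → R) : R :=
  ∑ S ∈ pairDeletions (n - 1) s, ∏ j ∈ survivors n S, f j

theorem rho_eq_seqRho (s : ℕ) (l : List R) :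
    rho s l = seqRho s l.length fun j => l.getD j 0 :=
  rfl

theorem seqRho_congr {s n : ℕ} {f g : ℕ → R} (h : ∀ j < n, f j = g j) :
    seqRho s n f = seqRho s n g :=
  sum_congr rfl fun _ _ => prod_congr rfl fun j hj => h j (mem_range.1 (mem_filter.1 hj).1)

theorem rho_ofFn (s n : ℕ) (f : ℕ → R) :
    rho s (List.ofFn (n := n) fun m => f m) = seqRho s n f := by
  rw [rho_eq_seqRho, List.length_ofFn]
  exact seqRho_congr fun j hj => by simp [List.getD_eq_getElem?_getD, hj]

theorem seqRho_zero (n : ℕ) (f : ℕ → R) : seqRho 0 n f = ∏ j ∈ range n, f j := by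
  simp [seqRho, pairDeletions, survivors, filter_singleton]

theorem seqRho_eq_zero {s n : ℕ} (h : n < 2 * s) (f : ℕ → R) : seqRho s n f = 0 := by
  refine sum_eq_zero fun S hS => absurd ?_ h.not_ge
  obtain ⟨⟨hsub, rfl⟩, hcons⟩ := mem_pairDeletions.1 hS
  have := two_mul_card_le_of_add_one_notMem hsub hcons
  rcases n with _ | n
  · simp_all
  · omega

theorem seqRho_add_two (s n : ℕ) (f : ℕ → R) :
    seqRho (s + 1) (n + 2) f = f (n + 1) * seqRho (s + 1) (n + 1) f + seqRho s n f := by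
  rw [seqRho, show n + 2 - 1 = n + 1 by omega, ← sum_filter_not_add_sum_filter _ (n ∈ ·),
    filter_notMem_pairDeletions]
  -- split according to whether the last pair `(n, n + 1)` is deleted
  congr 1
  · rw [seqRho, Nat.add_sub_cancel, mul_sum]
    refine sum_congr rfl fun S hS => ?_
    rw [survivors_succ ⟨notMem_of_mem_pairDeletions hS (by omega),
      notMem_of_mem_pairDeletions hS (by omega)⟩, prod_insert (by simp [survivors])]
  · refine sum_nbij' (·.erase n) (insert n) (fun S hS => (mem_filter_mem_pairDeletions.1 hS).2)
      (fun T hT => ?_) (fun S hS => insert_erase (mem_filter_mem_pairDeletions.1 hS).1)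
      (fun T hT => erase_insert (notMem_of_mem_pairDeletions hT (Nat.sub_le n 1)))
      (fun S hS => ?_)
    · refine mem_filter_mem_pairDeletions.2 ⟨mem_insert_self n T, ?_⟩
      rwa [erase_insert (notMem_of_mem_pairDeletions hT (Nat.sub_le n 1))]
    · obtain ⟨hn, hT⟩ := mem_filter_mem_pairDeletions.1 hS
      conv_lhs => rw [← insert_erase hn]
      rw [survivors_add_two_insert (mem_pairDeletions.1 hT).1.1]

def seqRhoZ (s : ℤ) (n : ℕ) (f : ℕ → R) : R :=
  if s < 0 then 0 else seqRho s.toNat n f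

theorem rhoZ_of_neg {s : ℤ} (hs : s < 0) (l : List R) : rhoZ s l = 0 :=
  if_pos hs

theorem rhoZ_ofFn (s : ℤ) (n : ℕ) (f : ℕ → R) :
    rhoZ s (List.ofFn (n := n) fun m => f m) = seqRhoZ s n f := by
  simp only [rhoZ, seqRhoZ, rho_ofFn]

theorem seqRhoZ_of_neg {s : ℤ} (hs : s < 0) (n : ℕ) (f : ℕ → R) : seqRhoZ s n f = 0 :=
  if_pos hs

theorem seqRhoZ_natCast (s n : ℕ) (f : ℕ → R) : seqRhoZ s n f = seqRho s n f := by
  simp [seqRhoZ]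

theorem seqRhoZ_succ {s : ℤ} {n : ℕ} (h : s ≤ 0 ∨ 1 ≤ n) (f : ℕ → R) :
    seqRhoZ s (n + 1) f = f n * seqRhoZ s n f + seqRhoZ (s - 1) (n - 1) f := by
  rcases lt_trichotomy s 0 with hs | rfl | hs
  · simp [seqRhoZ_of_neg hs, seqRhoZ_of_neg (by omega : s - 1 < 0)]
  · simp [seqRhoZ, seqRho_zero, prod_range_succ, mul_comm]
  · obtain ⟨t, rfl⟩ : ∃ t : ℕ, s = (t + 1 : ℕ) := ⟨s.toNat - 1, by omega⟩
    obtain ⟨m, rfl⟩ : ∃ m, n = m + 1 := ⟨n - 1, by omega⟩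
    rw [show ((t + 1 : ℕ) : ℤ) - 1 = t by push_cast; ring, seqRhoZ_natCast, seqRhoZ_natCast,
      seqRhoZ_natCast, Nat.add_sub_cancel]
    exact seqRho_add_two t m f

theorem seqRhoZ_two_mul (s : ℕ) (f : ℕ → R) : seqRhoZ s (2 * s) f = 1 := by
  rw [seqRhoZ_natCast]
  induction s with
  | zero => simp [seqRho_zero]
  | succ s ih =>
    rw [show 2 * (s + 1) = 2 * s + 2 by ring, seqRho_add_two, ih, seqRho_eq_zero (by omega)]
    ring

theorem seqRhoZ_two_mul_add_one (i : ℕ) (f : ℕ → R) :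
    seqRhoZ i (2 * i + 1) f = ∑ t ∈ range (i + 1), f (2 * t) := by
  induction i with
  | zero => simp [seqRhoZ, seqRho_zero]
  | succ m ih =>
    rw [seqRhoZ_succ (Or.inr (by omega)), seqRhoZ_two_mul, show 2 * (m + 1) - 1 = 2 * m + 1 by omega,
      show ((m + 1 : ℕ) : ℤ) - 1 = m by push_cast; ring, ih, sum_range_succ _ (m + 1)]
    ring

theorem seqRhoZ_two_mul_add_two_add_shift (i : ℕ) (f : ℕ → R) :
    seqRhoZ i (2 * i + 2) f + seqRhoZ ((i : ℤ) - 1) (2 * i) (fun m => f (m + 1)) =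
      (∑ t ∈ range (i + 1), f (2 * t)) * ∑ t ∈ range (i + 1), f (2 * t + 1) := by
  induction i with
  | zero => simp [seqRhoZ, seqRho_zero, prod_range_succ, mul_comm]
  | succ m ih =>
    have hf : seqRhoZ (m + 1 : ℕ) (2 * (m + 1) + 2) f =
        f (2 * m + 3) * ∑ t ∈ range (m + 2), f (2 * t) + seqRhoZ m (2 * m + 2) f := by
      rw [seqRhoZ_succ (Or.inr (by omega)), ← seqRhoZ_two_mul_add_one,
        show ((m + 1 : ℕ) : ℤ) - 1 = m by push_cast; ring]
      rfl
    have hg : seqRhoZ (((m + 1 : ℕ) : ℤ) - 1) (2 * (m + 1)) (fun t => f (t + 1)) =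
        f (2 * m + 2) * ∑ t ∈ range (m + 1), f (2 * t + 1) +
          seqRhoZ ((m : ℤ) - 1) (2 * m) (fun t => f (t + 1)) := by
      rw [show ((m + 1 : ℕ) : ℤ) - 1 = m by push_cast; ring, show 2 * (m + 1) = 2 * m + 1 + 1 by ring,
        seqRhoZ_succ (Or.inr (by omega)), seqRhoZ_two_mul_add_one, Nat.add_sub_cancel]
    rw [hf, hg, sum_range_succ _ (m + 1), sum_range_succ _ (m + 1)]
    linear_combination ih

end SeqRho

section Interleave

variable {α : Type*} (u v : ℕ → α)

def interleave (m : ℕ) : α :=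
  if m % 2 = 0 then u (m / 2 + 1) else v (m / 2 + 1)

theorem interleave_two_mul (t : ℕ) : interleave u v (2 * t) = u (t + 1) := by
  rw [interleave, if_pos (by omega), Nat.mul_div_cancel_left t two_pos]

theorem interleave_two_mul_add_one (t : ℕ) : interleave u v (2 * t + 1) = v (t + 1) := by
  rw [interleave, if_neg (by omega), show (2 * t + 1) / 2 = t by omega]

theorem listA_eq_ofFn (i : ℕ) :
    listA u v i = List.ofFn (n := 2 * i - 1) fun m => interleave u v m :=
  rfl

theorem listC_eq_ofFn (i : ℕ) :
    listC u v i = List.ofFn (n := 2 * i) fun m => interleave u v m :=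
  rfl

theorem interleave_succ (m : ℕ) :
    interleave u v (m + 1) = interleave v (fun t => u (t + 1)) m := by
  rcases Nat.even_or_odd' m with ⟨t, rfl | rfl⟩
  · rw [interleave_two_mul_add_one, interleave_two_mul]
  · rw [show 2 * t + 1 + 1 = 2 * (t + 1) by ring, interleave_two_mul, interleave_two_mul_add_one]

theorem listB_eq_ofFn (i : ℕ) :
    listB u v i = List.ofFn (n := 2 * i - 2) fun m => interleave v (fun t => u (t + 1)) m :=
  rfl

theorem listD_eq_ofFn (i : ℕ) :
    listD u v i = List.ofFn (n := 2 * i - 1) fun m => interleave v (fun t => u (t + 1)) m :=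
  rfl

end Interleave

section ListRecursions

variable {R : Type*} [CommRing R] (u v : ℕ → R)

theorem rhoZ_listA_succ {s : ℤ} {i : ℕ} (hs : s ≤ i) :
    rhoZ s (listA u v (i + 1)) = u (i + 1) * rhoZ s (listC u v i) + rhoZ (s - 1) (listA u v i) := by
  simp only [listA_eq_ofFn, listC_eq_ofFn, rhoZ_ofFn]
  rw [show 2 * (i + 1) - 1 = 2 * i + 1 by omega, seqRhoZ_succ (by omega), interleave_two_mul]

theorem rhoZ_listC_succ (s : ℤ) (i : ℕ) :
    rhoZ s (listC u v (i + 1)) =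
      v (i + 1) * rhoZ s (listA u v (i + 1)) + rhoZ (s - 1) (listC u v i) := by
  simp only [listA_eq_ofFn, listC_eq_ofFn, rhoZ_ofFn]
  rw [show 2 * (i + 1) = 2 * i + 1 + 1 by ring, seqRhoZ_succ (Or.inr (by omega)),
    interleave_two_mul_add_one, Nat.add_sub_cancel, Nat.add_sub_cancel]

theorem rhoZ_listB_succ {s : ℤ} {i : ℕ} (hs : s < i) :
    rhoZ s (listB u v (i + 1)) = u (i + 1) * rhoZ s (listD u v i) + rhoZ (s - 1) (listB u v i) := by
  simp only [listB_eq_ofFn, listD_eq_ofFn, rhoZ_ofFn]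
  rcases i with _ | i
  · simp [seqRhoZ_of_neg (show s < 0 by omega), seqRhoZ_of_neg (show s - 1 < 0 by omega)]
  · rw [show 2 * (i + 1 + 1) - 2 = 2 * i + 1 + 1 by omega, show 2 * (i + 1) - 1 = 2 * i + 1 by omega,
      show 2 * (i + 1) - 2 = 2 * i + 1 - 1 by omega, seqRhoZ_succ (Or.inr (by omega)),
      interleave_two_mul_add_one]

theorem rhoZ_listD_succ {s : ℤ} {i : ℕ} (hs : s ≤ i) :
    rhoZ s (listD u v (i + 1)) =
      v (i + 1) * rhoZ s (listB u v (i + 1)) + rhoZ (s - 1) (listD u v i) := by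
  simp only [listB_eq_ofFn, listD_eq_ofFn, rhoZ_ofFn]
  rw [show 2 * (i + 1) - 1 = 2 * i + 1 by omega, show 2 * (i + 1) - 2 = 2 * i by omega,
    seqRhoZ_succ (by omega), interleave_two_mul]

theorem rhoZ_listA_eq_sum (i : ℕ) :
    rhoZ i (listA u v (i + 1)) = ∑ t ∈ range (i + 1), u (t + 1) := by
  rw [listA_eq_ofFn, rhoZ_ofFn, show 2 * (i + 1) - 1 = 2 * i + 1 by omega, seqRhoZ_two_mul_add_one]
  simp only [interleave_two_mul]

theorem rhoZ_listD_eq_sum (i : ℕ) :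
    rhoZ i (listD u v (i + 1)) = ∑ t ∈ range (i + 1), v (t + 1) := by
  rw [listD_eq_ofFn, rhoZ_ofFn, show 2 * (i + 1) - 1 = 2 * i + 1 by omega, seqRhoZ_two_mul_add_one]
  simp only [interleave_two_mul]

theorem rhoZ_listB_add_rhoZ_listC (i : ℕ) :
    rhoZ ((i : ℤ) - 1) (listB u v (i + 1)) + rhoZ i (listC u v (i + 1)) =
      (∑ t ∈ range (i + 1), u (t + 1)) * ∑ t ∈ range (i + 1), v (t + 1) := by
  rw [listB_eq_ofFn, listC_eq_ofFn, rhoZ_ofFn, rhoZ_ofFn, add_comm,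
    show 2 * (i + 1) - 2 = 2 * i by omega, show 2 * (i + 1) = 2 * i + 2 by ring,
    ← funext (interleave_succ u v), seqRhoZ_two_mul_add_two_add_shift]
  simp only [interleave_two_mul, interleave_two_mul_add_one]

end ListRecursions

theorem eq_sum_range_of_sub_eq {G : Type*} [AddCommGroup G] {c u : ℕ → G} (h1 : c 1 = 0)
    (hu : ∀ m, 1 ≤ m → u m = c (m + 1) - c m) (n : ℕ) :
    c (n + 1) = ∑ t ∈ range n, u (t + 1) := by
  rw [sum_congr rfl fun t _ => hu (t + 1) (Nat.le_add_left 1 t),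
    sum_range_sub (fun t => c (t + 1)), h1, sub_zero]

section Walk

variable {F : Type*} [Field F] {k : ℕ}

theorem lamAdjLR.sub_left {l l' r : ℕ → F} (h : lamAdjLR k l r) (h' : lamAdjLR k l' r) {e : ℕ}
    (he : 2 ≤ e) (hek : e ≤ k) (he4 : e % 4 = 0 ∨ e % 4 = 1) :
    l' e = l e + (l' 0 - l 0) * r (e - 2) := by
  linear_combination ((h'.2.2 e he hek).2 he4) - (h.2.2 e he hek).2 he4

theorem lamAdjLR.sub_right {l r r' : ℕ → F} (h : lamAdjLR k l r) (h' : lamAdjLR k l r') {e : ℕ}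
    (he : 2 ≤ e) (hek : e ≤ k) (he4 : e % 4 = 2 ∨ e % 4 = 3) :
    r' e = r e + (r' 0 - r 0) * l (e - 2) := by
  linear_combination ((h'.2.2 e he hek).1 he4) - (h.2.2 e he hek).1 he4

theorem lamAdjLR.left_add_two {l r : ℕ → F} (h : lamAdjLR k l r) {e : ℕ} (hek : e + 2 ≤ k)
    (he4 : e % 4 = 0 ∨ e % 4 = 1) : l (e + 2) = r 0 * l e - r (e + 2) := by
  have := (h.2.2 (e + 2) le_add_self hek).1 (by omega)
  rw [Nat.add_sub_cancel] at this
  linear_combination this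

/-- `[l 1]⟨r 1⟩[l 2]⟨r 2⟩…` is a walk in `Λ(k, q)`. -/
def IsLambdaWalk (k : ℕ) (l r : ℕ → ℕ → F) : Prop :=
  ∀ m, 1 ≤ m → lamAdjLR k (l m) (r m) ∧ lamAdjLR k (l (m + 1)) (r m)

variable {l r : ℕ → ℕ → F} {u v : ℕ → F}

theorem IsLambdaWalk.left_step (hw : IsLambdaWalk k l r)
    (hu : ∀ m, 1 ≤ m → u m = l (m + 1) 0 - l m 0) (p : ℕ) {e : ℕ}
    (he : 2 ≤ e) (hek : e ≤ k) (he4 : e % 4 = 0 ∨ e % 4 = 1) :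
    l (p + 2) e = l (p + 1) e + u (p + 1) * r (p + 1) (e - 2) := by
  rw [hu (p + 1) le_add_self]
  exact (hw (p + 1) le_add_self).1.sub_left (hw (p + 1) le_add_self).2 he hek he4

theorem IsLambdaWalk.right_step (hw : IsLambdaWalk k l r)
    (hv : ∀ m, 1 ≤ m → v m = r (m + 1) 0 - r m 0) (p : ℕ) {e : ℕ}
    (he : 2 ≤ e) (hek : e ≤ k) (he4 : e % 4 = 2 ∨ e % 4 = 3) :
    r (p + 2) e = r (p + 1) e + v (p + 1) * l (p + 2) (e - 2) := by
  rw [hv (p + 1) le_add_self]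
  exact (hw (p + 1) le_add_self).2.sub_right (hw (p + 2) le_add_self).1 he hek he4

theorem IsLambdaWalk.even_entries (hw : IsLambdaWalk k l r) (hl1 : ∀ e, l 1 e = 0)
    (hr1 : ∀ e, r 1 e = 0) (hu : ∀ m, 1 ≤ m → u m = l (m + 1) 0 - l m 0)
    (hv : ∀ m, 1 ≤ m → v m = r (m + 1) 0 - r m 0) (n j : ℕ) :
    (4 * j ≤ k → l (n + 1) (4 * j) = rhoZ ((n : ℤ) - j - 1) (listA u v n)) ∧
    (4 * j + 2 ≤ k → r (n + 1) (4 * j + 2) = rhoZ ((n : ℤ) - j - 1) (listC u v n)) := by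
  induction n generalizing j with
  | zero => exact ⟨fun _ => by rw [hl1, rhoZ_of_neg (by omega)],
      fun _ => by rw [hr1, rhoZ_of_neg (by omega)]⟩
  | succ p ih =>
    have hA : ∀ j, 4 * j ≤ k → l (p + 2) (4 * j) = rhoZ ((p : ℤ) - j) (listA u v (p + 1)) := by
      rintro (_ | j) hj
      · simpa using (eq_sum_range_of_sub_eq (c := fun m => l m 0) (hl1 0) hu (p + 1)).trans
          (rhoZ_listA_eq_sum u v p).symm
      · rw [hw.left_step hu p (by omega) hj (by omega), show 4 * (j + 1) - 2 = 4 * j + 2 by omega,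
          (ih (j + 1)).1 (by omega), (ih j).2 (by omega), rhoZ_listA_succ u v (by omega)]
        push_cast
        ring_nf
    have hC : ∀ j, 4 * j + 2 ≤ k →
        r (p + 2) (4 * j + 2) = rhoZ ((p : ℤ) - j) (listC u v (p + 1)) := by
      intro j hj
      rw [hw.right_step hv p (by omega) hj (by omega), Nat.add_sub_cancel, (ih j).2 hj,
        hA j (by omega), rhoZ_listC_succ]
      ring_nf
    have hs : ((p + 1 : ℕ) : ℤ) - j - 1 = p - j := by push_cast; ring
    exact ⟨fun hj => hs ▸ hA j hj, fun hj => hs ▸ hC j hj⟩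

theorem IsLambdaWalk.odd_entries (hw : IsLambdaWalk k l r) (hk : 2 ≤ k) (hl1 : ∀ e, l 1 e = 0)
    (hr1 : ∀ e, r 1 e = 0) (hu : ∀ m, 1 ≤ m → u m = l (m + 1) 0 - l m 0)
    (hv : ∀ m, 1 ≤ m → v m = r (m + 1) 0 - r m 0) (n j : ℕ) :
    (4 * j + 1 ≤ k → l (n + 1) (4 * j + 1) = rhoZ ((n : ℤ) - j - 2) (listB u v n)) ∧
    (4 * j + 3 ≤ k → r (n + 1) (4 * j + 3) = rhoZ ((n : ℤ) - j - 2) (listD u v n)) := by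
  induction n generalizing j with
  | zero => exact ⟨fun _ => by rw [hl1, rhoZ_of_neg (by omega)],
      fun _ => by rw [hr1, rhoZ_of_neg (by omega)]⟩
  | succ p ih =>
    have hB : ∀ j, 4 * j + 1 ≤ k →
        l (p + 2) (4 * j + 1) = rhoZ ((p : ℤ) - j - 1) (listB u v (p + 1)) := by
      rintro (_ | j) hj
      · have hadj := (hw (p + 2) le_add_self).1
        have h2 := (hadj.2.2 2 le_rfl hk).1 (by norm_num)
        have hx := eq_sum_range_of_sub_eq (c := fun m => l m 0) (hl1 0) hu (p + 1)
        have hy := eq_sum_range_of_sub_eq (c := fun m => r m 0) (hr1 0) hv (p + 1)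
        have hC := (hw.even_entries hl1 hr1 hu hv (p + 1) 0).2 (by omega)
        have hBC := rhoZ_listB_add_rhoZ_listC u v p
        simp only [Nat.sub_self, mul_zero, zero_add, Nat.cast_zero, sub_zero, Nat.cast_add,
          Nat.cast_one, add_sub_cancel_right] at h2 hC hx hy ⊢
        -- with `x`, `y` the colours of `l (p + 2)`, `r (p + 2)`:
        -- `l₁ = l₂ = y x - r₂` and `rho_{p-1}(listB) + rho_p(listC) = x y`
        linear_combination hadj.1 + h2 - hC - hBC + l (p + 2) 0 * hy
          + (∑ t ∈ range (p + 1), v (t + 1)) * hx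
      · rw [hw.left_step hu p (by omega) hj (by omega), show 4 * (j + 1) + 1 - 2 = 4 * j + 3 by omega,
          (ih (j + 1)).1 (by omega), (ih j).2 (by omega), rhoZ_listB_succ u v (by omega)]
        push_cast
        ring_nf
    have hD : ∀ j, 4 * j + 3 ≤ k →
        r (p + 2) (4 * j + 3) = rhoZ ((p : ℤ) - j - 1) (listD u v (p + 1)) := by
      intro j hj
      rw [hw.right_step hv p (by omega) hj (by omega), show 4 * j + 3 - 2 = 4 * j + 1 by omega,
        (ih j).2 hj, hB j (by omega), rhoZ_listD_succ u v (by omega)]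
      ring_nf
    have hs : ((p + 1 : ℕ) : ℤ) - j - 2 = p - j - 1 := by push_cast; ring
    exact ⟨fun hj => hs ▸ hB j hj, fun hj => hs ▸ hD j hj⟩

end Walk

theorem lambda_walk_closed_form_general (k : ℕ) (hk : 3 ≤ k)
    (F : Type*) [Field F]
    (L R : ℕ → PVec F k)
    (hL1 : ∀ m, (L 1).1 m = 0) (hR1 : ∀ m, (R 1).1 m = 0)
    (hadj₁ : ∀ i, 1 ≤ i → (LambdaGraph F k).Adj (Sum.inl (L i)) (Sum.inr (R i)))
    (hadj₂ : ∀ i, 1 ≤ i → (LambdaGraph F k).Adj (Sum.inr (R i)) (Sum.inl (L (i + 1))))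
    (u v : ℕ → F)
    (hu : ∀ i, 1 ≤ i → u i = (L (i + 1)).1 0 - (L i).1 0)
    (hv : ∀ i, 1 ≤ i → v i = (R (i + 1)).1 0 - (R i).1 0)
    (i j : ℕ) :
    (4 * j ≤ k →
      (L (i + 1)).1 (4 * j) = rhoZ ((i : ℤ) - j - 1) (listA u v i)) ∧
    (4 * j + 1 ≤ k →
      (L (i + 1)).1 (4 * j + 1) = rhoZ ((i : ℤ) - j - 2) (listB u v i)) ∧
    (4 * j + 2 ≤ k →
      (L (i + 1)).1 (4 * j + 2) =
        (R (i + 1)).1 0 * (L (i + 1)).1 (4 * j) - rhoZ ((i : ℤ) - j - 1) (listC u v i)) ∧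
    (4 * j + 3 ≤ k →
      (L (i + 1)).1 (4 * j + 3) =
        (R (i + 1)).1 0 * (L (i + 1)).1 (4 * j + 1) - rhoZ ((i : ℤ) - j - 2) (listD u v i)) := by
  have hw : IsLambdaWalk k (fun m => (L m).1) (fun m => (R m).1) :=
    fun m hm => ⟨hadj₁ m hm, hadj₂ m hm⟩
  obtain ⟨hA, hC⟩ := hw.even_entries hL1 hR1 hu hv i j
  obtain ⟨hB, hD⟩ := hw.odd_entries (by omega) hL1 hR1 hu hv i j
  have hadj := (hw (i + 1) le_add_self).1
  refine ⟨hA, hB, fun hj => ?_, fun hj => ?_⟩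
  · rw [← hC hj]
    exact hadj.left_add_two hj (by omega)
  · rw [← hD hj]
    exact hadj.left_add_two (e := 4 * j + 1) hj (by omega)

/-- Theorem 1 of the paper: closed form for the entries of the left vertices of a
backtrackless walk `[L 1]⟨R 1⟩[L 2]⟨R 2⟩…` in `Λ(k,q)` starting with the all-zero vectors. -/
theorem lambda_walk_closed_form (q k : ℕ) (hq : IsPrimePow q) (hk : 3 ≤ k)
    (F : Type*) [Field F] [Fintype F] (hF : Fintype.card F = q)
    (L R : ℕ → PVec F k)
    (hL1 : ∀ m, (L 1).1 m = 0) (hR1 : ∀ m, (R 1).1 m = 0)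
    (hadj₁ : ∀ i, 1 ≤ i → (LambdaGraph F k).Adj (Sum.inl (L i)) (Sum.inr (R i)))
    (hadj₂ : ∀ i, 1 ≤ i → (LambdaGraph F k).Adj (Sum.inr (R i)) (Sum.inl (L (i + 1))))
    (hbtL : ∀ i, 1 ≤ i → L i ≠ L (i + 1))
    (hbtR : ∀ i, 1 ≤ i → R i ≠ R (i + 1))
    (u v : ℕ → F)
    (hu : ∀ i, 1 ≤ i → u i = (L (i + 1)).1 0 - (L i).1 0)
    (hv : ∀ i, 1 ≤ i → v i = (R (i + 1)).1 0 - (R i).1 0)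
    (i j : ℕ) (hi : 1 ≤ i) :
    (4 * j ≤ k →
      (L (i + 1)).1 (4 * j) = rhoZ ((i : ℤ) - j - 1) (listA u v i)) ∧
    (4 * j + 1 ≤ k →
      (L (i + 1)).1 (4 * j + 1) = rhoZ ((i : ℤ) - j - 2) (listB u v i)) ∧
    (4 * j + 2 ≤ k →
      (L (i + 1)).1 (4 * j + 2) =
        (R (i + 1)).1 0 * (L (i + 1)).1 (4 * j) - rhoZ ((i : ℤ) - j - 1) (listC u v i)) ∧
    (4 * j + 3 ≤ k →
      (L (i + 1)).1 (4 * j + 3) =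
        (R (i + 1)).1 0 * (L (i + 1)).1 (4 * j + 1) - rhoZ ((i : ℤ) - j - 2) (listD u v i)) :=
  lambda_walk_closed_form_general k hk F L R hL1 hR1 hadj₁ hadj₂ u v hu hv i j
end

section
/- Let q be a prime power and r, s, t ∈ F_q^*. Then in the bipartite graph Λ_{4,q}, for the 8 vertices [0,0,0,0,0], ⟨0,0,0,0,0⟩, [r,0,0,0,0], ⟨s,0,rs,0,r²s⟩, [r+t, st, st, s²t, rst], ⟨0,0,−st,−s²t,−st(2r+t)⟩, [t, st, st, s²t, 2rst], ⟨s,0,0,0,−2rst⟩, each consecutive pair is adjacent, and the last vertex is adjacent to the first (so that these vertices form an 8-cycle in Λ_{4,q}) if and only if the characteristic of F_q is 2. -/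
/-- The element of `PVec F 4` with coordinates `(a, b, c, d, e)`. -/
def mk5 {F : Type*} [Zero F] (a b c d e : F) : PVec F 4 :=
  ⟨fun i => [a, b, c, d, e].getD i 0, fun i hi =>
    List.getD_eq_default _ _ (by simp only [List.length_cons, List.length_nil]; omega)⟩

/-- The explicit backtrackless closed walk of length 8 in `Λ(4,q)` determined by
`r, s, t ∈ F_q^*`: the seven consecutive adjacencies always hold, and the closing
edge (hence an 8-cycle) holds if and only if the characteristic of `F_q` is 2. -/
theorem lambda4_eight_walk (q : ℕ) (hq : IsPrimePow q)
    (F : Type*) [Field F] [Fintype F] (hF : Fintype.card F = q)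
    (r s t : F) (hr : r ≠ 0) (hs : s ≠ 0) (ht : t ≠ 0) :
    (LambdaGraph F 4).Adj (Sum.inl (mk5 0 0 0 0 0)) (Sum.inr (mk5 0 0 0 0 0)) ∧
    (LambdaGraph F 4).Adj (Sum.inr (mk5 0 0 0 0 0)) (Sum.inl (mk5 r 0 0 0 0)) ∧
    (LambdaGraph F 4).Adj (Sum.inl (mk5 r 0 0 0 0))
      (Sum.inr (mk5 s 0 (r * s) 0 (r ^ 2 * s))) ∧
    (LambdaGraph F 4).Adj (Sum.inr (mk5 s 0 (r * s) 0 (r ^ 2 * s)))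
      (Sum.inl (mk5 (r + t) (s * t) (s * t) (s ^ 2 * t) (r * s * t))) ∧
    (LambdaGraph F 4).Adj (Sum.inl (mk5 (r + t) (s * t) (s * t) (s ^ 2 * t) (r * s * t)))
      (Sum.inr (mk5 0 0 (-(s * t)) (-(s ^ 2 * t)) (-(s * t * (2 * r + t))))) ∧
    (LambdaGraph F 4).Adj (Sum.inr (mk5 0 0 (-(s * t)) (-(s ^ 2 * t)) (-(s * t * (2 * r + t)))))
      (Sum.inl (mk5 t (s * t) (s * t) (s ^ 2 * t) (2 * r * s * t))) ∧
    (LambdaGraph F 4).Adj (Sum.inl (mk5 t (s * t) (s * t) (s ^ 2 * t) (2 * r * s * t)))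
      (Sum.inr (mk5 s 0 0 0 (-(2 * r * s * t)))) ∧
    ((LambdaGraph F 4).Adj (Sum.inr (mk5 s 0 0 0 (-(2 * r * s * t))))
      (Sum.inl (mk5 0 0 0 0 0)) ↔ ringChar F = 2) := by
  have key : ∀ l r : ℕ → F, lamAdjLR 4 l r ↔
      (l 1 = l 2 ∧ r 1 = 0 ∧ l 2 + r 2 = r 0 * l 0 ∧ l 3 + r 3 = r 0 * l 1 ∧
        l 4 + r 4 = l 0 * r 2) := by
    intro l r
    constructor
    · rintro ⟨h1, h2, h3⟩
      refine ⟨h1, h2, ?_, ?_, ?_⟩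
      · exact (h3 2 (by norm_num) (by norm_num)).1 (by norm_num)
      · exact (h3 3 (by norm_num) (by norm_num)).1 (by norm_num)
      · exact (h3 4 (by norm_num) (by norm_num)).2 (by norm_num)
    · rintro ⟨h1, h2, h3, h4, h5⟩
      refine ⟨h1, h2, fun i hi hi' => ?_⟩
      interval_cases i <;> constructor <;> simp_all
  have adj : ∀ x y : PVec F 4, (LambdaGraph F 4).Adj (Sum.inl x) (Sum.inr y) ↔
      lamAdjLR 4 x.1 y.1 := fun _ _ => Iff.rfl
  have adj' : ∀ x y : PVec F 4, (LambdaGraph F 4).Adj (Sum.inr y) (Sum.inl x) ↔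
      lamAdjLR 4 x.1 y.1 := fun _ _ => Iff.rfl
  have hchar : (2 : F) = 0 ↔ ringChar F = 2 := by
    constructor
    · intro h
      have h2 : ringChar F ∣ 2 := by
        have := (ringChar.spec F 2)
        rw [← this]; push_cast [h]; rfl
      rcases (Nat.dvd_prime Nat.prime_two).mp h2 with h' | h'
      · exact absurd h' (CharP.ringChar_ne_one)
      · exact h'
    · intro h
      have : CharP F 2 := ringChar.of_eq h
      exact CharP.cast_eq_zero F 2
  simp only [adj, adj', key, mk5, List.getD]
  norm_num
  and_intros <;> try trivial
  all_goals try ring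
  simp only [hr, hs, ht, or_false]
  exact hchar
end

section
/- The girth of Λ_{3,3} is 8, and the girth of Λ_{4,3} is at least 10. -/
/-!
`Λ(k)` is bipartite, so a cycle of length `2n` runs through left vertices `xᵢ` and right vertices
`yᵢ` with `xᵢ ∼ yᵢ ∼ xᵢ₊₁` (indices mod `n`), and no two consecutive ones agree. A vertex is
determined by one neighbour and its `0`-th coordinate, so `aᵢ = xᵢ(0)` and `bᵢ = yᵢ(0)` satisfy
`aᵢ ≠ aᵢ₊₁` and `bᵢ ≠ bᵢ₊₁`. Subtracting the adjacency equations of two neighbours of one vertex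
and telescoping coordinates `2` and `3` of the `xᵢ` and coordinate `4` of the `yᵢ` around the
cycle gives `∑ bᵢ (aᵢ - aᵢ₊₁) = 0`, `∑ bᵢ² (aᵢ - aᵢ₊₁) = 0` (for `k ≥ 3`) and
`∑ aᵢ₊₁² (bᵢ - bᵢ₊₁) = 0` (for `k ≥ 4`). The first relation rules out `n = 2` over any field;
over `𝔽₃` the first two rule out `n = 3` and all three rule out `n = 4`. An explicit `8`-cycle in
`Λ(3,3)` gives the upper bound.
-/

open SimpleGraph Finset

namespace SimpleGraph.Walk

variable {V : Type*} {G : SimpleGraph V} {u : V}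

lemma getVert_mod_length_of_le (w : G.Walk u u) {i : ℕ} (hi : i ≤ w.length) :
    w.getVert (i % w.length) = w.getVert i := by
  rcases hi.lt_or_eq with hi | rfl
  · rw [Nat.mod_eq_of_lt hi]
  · rw [Nat.mod_self, getVert_zero, getVert_length]

lemma adj_getVert_mod_length (w : G.Walk u u) (hw : w.length ≠ 0) (j : ℕ) :
    G.Adj (w.getVert (j % w.length)) (w.getVert ((j + 1) % w.length)) := by
  have hj := Nat.mod_lt j (Nat.pos_of_ne_zero hw)
  rw [← Nat.mod_add_mod, w.getVert_mod_length_of_le hj]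
  exact w.adj_getVert_succ hj

lemma IsCycle.getVert_mod_length_ne_add_two {w : G.Walk u u} (hw : w.IsCycle) (j : ℕ) :
    w.getVert (j % w.length) ≠ w.getVert ((j + 2) % w.length) := by
  have h3 := hw.three_le_length
  rw [← Nat.mod_add_mod]
  have hj := Nat.mod_lt j (by omega : 0 < w.length)
  generalize j % w.length = i at hj ⊢
  by_cases hlast : i + 1 = w.length
  · rw [show i + 2 = w.length + 1 by omega, Nat.add_mod_left,
      Nat.mod_eq_of_lt (by omega : 1 < w.length), show i = w.length - 1 by omega]
    exact hw.snd_ne_penultimate.symm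
  · rw [w.getVert_mod_length_of_le (by omega)]
    exact hw.getVert_sub_one_ne_getVert_add_one (i := i + 1) (by omega)

end SimpleGraph.Walk

variable {F : Type*} [Field F] {k : ℕ}

namespace lamAdjLR

variable {l l' r r' : ℕ → F} {i : ℕ}

lemma sub_left_of_two_le_mod (hl : lamAdjLR k l r) (hl' : lamAdjLR k l' r) (hik : i + 2 ≤ k)
    (h4 : 2 ≤ (i + 2) % 4) : l (i + 2) - l' (i + 2) = r 0 * (l i - l' i) := by
  have e := (hl.2.2 (i + 2) (by omega) hik).1 (by omega)
  have e' := (hl'.2.2 (i + 2) (by omega) hik).1 (by omega)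
  simp only [Nat.add_sub_cancel] at e e'
  linear_combination e - e'

lemma sub_left_of_mod_lt_two (hl : lamAdjLR k l r) (hl' : lamAdjLR k l' r) (hik : i + 2 ≤ k)
    (h4 : (i + 2) % 4 < 2) : l (i + 2) - l' (i + 2) = r i * (l 0 - l' 0) := by
  have e := (hl.2.2 (i + 2) (by omega) hik).2 (by omega)
  have e' := (hl'.2.2 (i + 2) (by omega) hik).2 (by omega)
  simp only [Nat.add_sub_cancel] at e e'
  linear_combination e - e'

lemma sub_right_of_two_le_mod (hr : lamAdjLR k l r) (hr' : lamAdjLR k l r') (hik : i + 2 ≤ k)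
    (h4 : 2 ≤ (i + 2) % 4) : r (i + 2) - r' (i + 2) = l i * (r 0 - r' 0) := by
  have e := (hr.2.2 (i + 2) (by omega) hik).1 (by omega)
  have e' := (hr'.2.2 (i + 2) (by omega) hik).1 (by omega)
  simp only [Nat.add_sub_cancel] at e e'
  linear_combination e - e'

lemma sub_right_of_mod_lt_two (hr : lamAdjLR k l r) (hr' : lamAdjLR k l r') (hik : i + 2 ≤ k)
    (h4 : (i + 2) % 4 < 2) : r (i + 2) - r' (i + 2) = l 0 * (r i - r' i) := by
  have e := (hr.2.2 (i + 2) (by omega) hik).2 (by omega)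
  have e' := (hr'.2.2 (i + 2) (by omega) hik).2 (by omega)
  simp only [Nat.add_sub_cancel] at e e'
  linear_combination e - e'

lemma sub_left_two (hl : lamAdjLR k l r) (hl' : lamAdjLR k l' r) (hk : 2 ≤ k) :
    l 2 - l' 2 = r 0 * (l 0 - l' 0) :=
  hl.sub_left_of_two_le_mod (i := 0) hl' hk (by norm_num)

lemma sub_left_three (hl : lamAdjLR k l r) (hl' : lamAdjLR k l' r) (hk : 3 ≤ k) :
    l 3 - l' 3 = r 0 ^ 2 * (l 0 - l' 0) := by
  have h3 := hl.sub_left_of_two_le_mod (i := 1) hl' hk (by norm_num)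
  have h2 := hl.sub_left_two hl' (by omega)
  rw [hl.1, hl'.1] at h3
  linear_combination h3 + r 0 * h2

lemma sub_right_two (hr : lamAdjLR k l r) (hr' : lamAdjLR k l r') (hk : 2 ≤ k) :
    r 2 - r' 2 = l 0 * (r 0 - r' 0) :=
  hr.sub_right_of_two_le_mod (i := 0) hr' hk (by norm_num)

lemma sub_right_four (hr : lamAdjLR k l r) (hr' : lamAdjLR k l r') (hk : 4 ≤ k) :
    r 4 - r' 4 = l 0 ^ 2 * (r 0 - r' 0) := by
  have h4 := hr.sub_right_of_mod_lt_two (i := 2) hr' hk (by norm_num)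
  have h2 := hr.sub_right_two hr' (by omega)
  linear_combination h4 + l 0 * h2

lemma left_eq_of_zero_eq (hl : lamAdjLR k l r) (hl' : lamAdjLR k l' r) (hk : 2 ≤ k)
    (h0 : l 0 = l' 0) : ∀ i ≤ k, l i = l' i := by
  have h2 : l 2 = l' 2 := by linear_combination hl.sub_left_two hl' hk + r 0 * h0
  intro i
  induction i using Nat.strong_induction_on with
  | _ i ih =>
    intro hik
    match i with
    | 0 => exact h0
    | 1 => rw [hl.1, hl'.1, h2]
    | i + 2 =>
      rcases lt_or_ge ((i + 2) % 4) 2 with h4 | h4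
      · linear_combination hl.sub_left_of_mod_lt_two hl' hik h4 + r i * h0
      · linear_combination hl.sub_left_of_two_le_mod hl' hik h4 +
          r 0 * ih i (by omega) (by omega)

lemma right_eq_of_zero_eq (hr : lamAdjLR k l r) (hr' : lamAdjLR k l r') (h0 : r 0 = r' 0) :
    ∀ i ≤ k, r i = r' i := by
  intro i
  induction i using Nat.strong_induction_on with
  | _ i ih =>
    intro hik
    match i with
    | 0 => exact h0
    | 1 => rw [hr.2.1, hr'.2.1]
    | i + 2 =>
      rcases lt_or_ge ((i + 2) % 4) 2 with h4 | h4
      · linear_combination hr.sub_right_of_mod_lt_two hr' hik h4 +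
          l 0 * ih i (by omega) (by omega)
      · linear_combination hr.sub_right_of_two_le_mod hr' hik h4 + l i * h0

end lamAdjLR

namespace PVec

lemma ext_of_le {f g : PVec F k} (h : ∀ i ≤ k, f.1 i = g.1 i) : f = g := by
  ext i
  rcases le_or_gt i k with hi | hi
  · exact h i hi
  · rw [f.2 i hi, g.2 i hi]

instance [DecidableEq F] : DecidableEq (PVec F k) := fun f g =>
  decidable_of_iff (∀ i : Fin (k + 1), f.1 i = g.1 i)
    ⟨fun h => ext_of_le fun i hi => h ⟨i, by omega⟩, fun h _ => by rw [h]⟩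

lemma eq_of_lamAdjLR_left {l l' : PVec F k} {r : ℕ → F} (hk : 2 ≤ k) (hl : lamAdjLR k l.1 r)
    (hl' : lamAdjLR k l'.1 r) (h0 : l.1 0 = l'.1 0) : l = l' :=
  ext_of_le (hl.left_eq_of_zero_eq hl' hk h0)

lemma eq_of_lamAdjLR_right {l : ℕ → F} {r r' : PVec F k} (hr : lamAdjLR k l r.1)
    (hr' : lamAdjLR k l r'.1) (h0 : r.1 0 = r'.1 0) : r = r' :=
  ext_of_le (hr.right_eq_of_zero_eq hr' h0)

def ofFn (c : Fin (k + 1) → F) : PVec F k :=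
  ⟨fun i => if h : i < k + 1 then c ⟨i, h⟩ else 0, fun _ hi => dif_neg (by omega)⟩

end PVec

namespace LambdaGraph

def tuple : PVec F k ⊕ PVec F k → PVec F k := Sum.elim id id

variable {v v' : PVec F k ⊕ PVec F k}

lemma isLeft_eq_not_of_adj (h : (LambdaGraph F k).Adj v v') : v'.isLeft = !v.isLeft := by
  rcases v with _ | _ <;> rcases v' with _ | _ <;> first | rfl | exact h.elim

lemma lamAdjLR_tuple_of_adj (h : (LambdaGraph F k).Adj v v') (hv : v.isLeft) :
    lamAdjLR k (tuple v).1 (tuple v').1 := by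
  rcases v with _ | _ <;> rcases v' with _ | _
  · exact h.elim
  · exact h
  all_goals simp at hv

lemma eq_of_tuple_eq (hv : v.isLeft = v'.isLeft) (h : tuple v = tuple v') : v = v' := by
  rcases v with _ | _ <;> rcases v' with _ | _ <;> simp_all [tuple]

def sideColoring : (LambdaGraph F k).Coloring Bool :=
  Coloring.mk Sum.isLeft fun h => by
    rw [isLeft_eq_not_of_adj h]
    exact (Bool.not_ne_self _).symm

/-- A closed walk `x 0, y 0, x 1, y 1, …, x n = x 0` of length `2 * n` in `Λ(k)` that never
returns along the edge it has just used; `x` runs through left and `y` through right vertices. -/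
structure NonbacktrackingCycle (k n : ℕ) (x y : ℕ → PVec F k) : Prop where
  adj_left : ∀ i, lamAdjLR k (x i).1 (y i).1
  adj_right : ∀ i, lamAdjLR k (x (i + 1)).1 (y i).1
  left_period : x n = x 0
  right_period : y n = y 0
  left_ne : ∀ i, x i ≠ x (i + 1)
  right_ne : ∀ i, y i ≠ y (i + 1)

namespace NonbacktrackingCycle

variable {n : ℕ} {x y : ℕ → PVec F k}

lemma left_zero_ne (hc : NonbacktrackingCycle k n x y) (hk : 2 ≤ k) (i : ℕ) :
    (x i).1 0 ≠ (x (i + 1)).1 0 := fun h =>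
  hc.left_ne i (PVec.eq_of_lamAdjLR_left hk (hc.adj_left i) (hc.adj_right i) h)

lemma right_zero_ne (hc : NonbacktrackingCycle k n x y) (i : ℕ) :
    (y i).1 0 ≠ (y (i + 1)).1 0 := fun h =>
  hc.right_ne i (PVec.eq_of_lamAdjLR_right (hc.adj_right i) (hc.adj_left (i + 1)) h)

lemma sum_range_left_sub (hc : NonbacktrackingCycle k n x y) (j : ℕ) :
    ∑ i ∈ range n, ((x i).1 j - (x (i + 1)).1 j) = 0 := by
  rw [sum_range_sub' (fun i => (x i).1 j), hc.left_period, sub_self]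

lemma sum_range_right_sub (hc : NonbacktrackingCycle k n x y) (j : ℕ) :
    ∑ i ∈ range n, ((y i).1 j - (y (i + 1)).1 j) = 0 := by
  rw [sum_range_sub' (fun i => (y i).1 j), hc.right_period, sub_self]

lemma sum_two (hc : NonbacktrackingCycle k n x y) (hk : 2 ≤ k) :
    ∑ i ∈ range n, (y i).1 0 * ((x i).1 0 - (x (i + 1)).1 0) = 0 :=
  (sum_congr rfl fun i _ =>
    ((hc.adj_left i).sub_left_two (hc.adj_right i) hk).symm).trans (hc.sum_range_left_sub 2)

lemma sum_three (hc : NonbacktrackingCycle k n x y) (hk : 3 ≤ k) :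
    ∑ i ∈ range n, (y i).1 0 ^ 2 * ((x i).1 0 - (x (i + 1)).1 0) = 0 :=
  (sum_congr rfl fun i _ =>
    ((hc.adj_left i).sub_left_three (hc.adj_right i) hk).symm).trans (hc.sum_range_left_sub 3)

lemma sum_four (hc : NonbacktrackingCycle k n x y) (hk : 4 ≤ k) :
    ∑ i ∈ range n, (x (i + 1)).1 0 ^ 2 * ((y i).1 0 - (y (i + 1)).1 0) = 0 :=
  (sum_congr rfl fun i _ =>
    ((hc.adj_right i).sub_right_four (hc.adj_left (i + 1)) hk).symm).trans
    (hc.sum_range_right_sub 4)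

lemma ne_two (hc : NonbacktrackingCycle k n x y) (hk : 2 ≤ k) : n ≠ 2 := by
  rintro rfl
  have h := hc.sum_two hk
  simp only [sum_range_succ, sum_range_zero, zero_add, hc.left_period] at h
  have ha := hc.left_zero_ne hk 0
  have hb := hc.right_zero_ne 1
  rw [hc.right_period] at hb
  exact mul_ne_zero (sub_ne_zero.2 hb) (sub_ne_zero.2 ha) (by linear_combination -h)

end NonbacktrackingCycle

lemma hexagon_sum_three_ne_zero : ∀ a₀ a₁ a₂ b₀ b₁ b₂ : ZMod 3,
    a₀ ≠ a₁ → a₁ ≠ a₂ → a₂ ≠ a₀ → b₀ ≠ b₁ → b₁ ≠ b₂ → b₂ ≠ b₀ →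
    b₀ * (a₀ - a₁) + b₁ * (a₁ - a₂) + b₂ * (a₂ - a₀) = 0 →
    b₀ ^ 2 * (a₀ - a₁) + b₁ ^ 2 * (a₁ - a₂) + b₂ ^ 2 * (a₂ - a₀) ≠ 0 := by
  decide

lemma octagon_sum_four_ne_zero : ∀ a₀ a₁ a₂ a₃ b₀ b₁ b₂ b₃ : ZMod 3,
    a₀ ≠ a₁ → a₁ ≠ a₂ → a₂ ≠ a₃ → a₃ ≠ a₀ → b₀ ≠ b₁ → b₁ ≠ b₂ → b₂ ≠ b₃ → b₃ ≠ b₀ →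
    b₀ * (a₀ - a₁) + b₁ * (a₁ - a₂) + b₂ * (a₂ - a₃) + b₃ * (a₃ - a₀) = 0 →
    b₀ ^ 2 * (a₀ - a₁) + b₁ ^ 2 * (a₁ - a₂) + b₂ ^ 2 * (a₂ - a₃) + b₃ ^ 2 * (a₃ - a₀) = 0 →
    a₁ ^ 2 * (b₀ - b₁) + a₂ ^ 2 * (b₁ - b₂) + a₃ ^ 2 * (b₂ - b₃) + a₀ ^ 2 * (b₃ - b₀) ≠ 0 := by
  decide

namespace NonbacktrackingCycle

variable {n : ℕ} {x y : ℕ → PVec (ZMod 3) k}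

lemma ne_three (hc : NonbacktrackingCycle k n x y) (hk : 3 ≤ k) : n ≠ 3 := by
  rintro rfl
  have h2 := hc.sum_two (by omega)
  have h3 := hc.sum_three hk
  simp only [sum_range_succ, sum_range_zero, zero_add, hc.left_period] at h2 h3
  have ha := hc.left_zero_ne (by omega)
  have hb := hc.right_zero_ne
  exact hexagon_sum_three_ne_zero _ _ _ _ _ _ (ha 0) (ha 1)
    (by simpa [hc.left_period] using ha 2) (hb 0) (hb 1)
    (by simpa [hc.right_period] using hb 2) h2 h3

lemma ne_four (hc : NonbacktrackingCycle k n x y) (hk : 4 ≤ k) : n ≠ 4 := by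
  rintro rfl
  have h2 := hc.sum_two (by omega)
  have h3 := hc.sum_three (by omega)
  have h4 := hc.sum_four hk
  simp only [sum_range_succ, sum_range_zero, zero_add, hc.left_period, hc.right_period]
    at h2 h3 h4
  have ha := hc.left_zero_ne (by omega)
  have hb := hc.right_zero_ne
  exact octagon_sum_four_ne_zero _ _ _ _ _ _ _ _ (ha 0) (ha 1) (ha 2)
    (by simpa [hc.left_period] using ha 3) (hb 0) (hb 1) (hb 2)
    (by simpa [hc.right_period] using hb 3) h2 h3 h4

end NonbacktrackingCycle

lemma exists_nonbacktrackingCycle {u : PVec F k ⊕ PVec F k} {w : (LambdaGraph F k).Walk u u}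
    (hw : w.IsCycle) :
    ∃ n, ∃ x y : ℕ → PVec F k, w.length = 2 * n ∧ NonbacktrackingCycle k n x y := by
  obtain ⟨n, hn⟩ : Even w.length := (Coloring.even_length_iff_congr sideColoring w).2 Iff.rfl
  have hlen : w.length = 2 * n := by omega
  set v : ℕ → PVec F k ⊕ PVec F k := fun j => w.getVert (j % w.length)
  have hadj (j : ℕ) : (LambdaGraph F k).Adj (v j) (v (j + 1)) :=
    w.adj_getVert_mod_length (by have := hw.three_le_length; omega) j
  have hside (j : ℕ) : (v (j + 1)).isLeft = !(v j).isLeft := isLeft_eq_not_of_adj (hadj j)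
  obtain ⟨s, hs⟩ : ∃ s, (v s).isLeft := by
    cases h : (v 0).isLeft
    · exact ⟨1, by rw [hside, h]; rfl⟩
    · exact ⟨0, h⟩
  have hleft (i : ℕ) : (v (2 * i + s)).isLeft := by
    induction i with
    | zero => simpa using hs
    | succ i ih => rw [show 2 * (i + 1) + s = 2 * i + s + 1 + 1 by ring, hside, hside, ih]; rfl
  have hright (i : ℕ) : (v (2 * i + s + 1)).isLeft = false := by rw [hside, hleft]; rfl
  have hperiod (j : ℕ) : v (2 * n + j) = v j := by simp only [v, hlen, Nat.add_mod_left]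
  have hstep (i : ℕ) : 2 * (i + 1) + s = 2 * i + s + 1 + 1 := by ring
  refine ⟨n, fun i => tuple (v (2 * i + s)), fun i => tuple (v (2 * i + s + 1)), hlen,
    ⟨fun i => lamAdjLR_tuple_of_adj (hadj _) (hleft i), fun i => ?_, ?_, ?_, fun i => ?_,
      fun i => ?_⟩⟩
  · rw [hstep]
    exact lamAdjLR_tuple_of_adj (hadj _).symm (hstep i ▸ hleft (i + 1))
  · simp only [hperiod, mul_zero, zero_add]
  · simp only [add_assoc, hperiod, mul_zero, zero_add]
  · refine fun h => hw.getVert_mod_length_ne_add_two (2 * i + s) (eq_of_tuple_eq ?_ ?_)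
    · rw [hleft, ← hstep, hleft]
    · rwa [← hstep]
  · refine fun h => hw.getVert_mod_length_ne_add_two (2 * i + s + 1) (eq_of_tuple_eq ?_ ?_)
    · rw [hright, show 2 * i + s + 1 + 2 = 2 * (i + 1) + s + 1 by ring, hright]
    · rwa [show 2 * i + s + 1 + 2 = 2 * (i + 1) + s + 1 by ring]


lemma le_egirth_of_nonbacktrackingCycle {m : ℕ}
    (h : ∀ n, ∀ x y : ℕ → PVec F k, NonbacktrackingCycle k n x y → 2 ≤ n → m ≤ 2 * n) :
    (m : ℕ∞) ≤ (LambdaGraph F k).egirth :=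
  le_egirth.2 fun _ w hw => by
    obtain ⟨n, x, y, hlen, hc⟩ := exists_nonbacktrackingCycle hw
    have := hw.three_le_length
    rw [hlen]
    exact_mod_cast h n x y hc (by omega)

lemma adj_inl_inr_of_three {l r : PVec F 3}
    (h : l.1 1 = l.1 2 ∧ r.1 1 = 0 ∧ l.1 2 + r.1 2 = r.1 0 * l.1 0 ∧
      l.1 3 + r.1 3 = r.1 0 * l.1 1) :
    (LambdaGraph F 3).Adj (.inl l) (.inr r) := by
  obtain ⟨h1, h2, h3, h4⟩ := h
  refine ⟨h1, h2, fun i hi hik => ?_⟩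
  interval_cases i
  · exact ⟨fun _ => h3, by omega⟩
  · exact ⟨fun _ => h4, by omega⟩

def octagon : (LambdaGraph (ZMod 3) 3).Walk (.inl (.ofFn ![0, 0, 0, 0]))
    (.inl (.ofFn ![0, 0, 0, 0])) :=
  .cons (adj_inl_inr_of_three (r := .ofFn ![0, 0, 0, 0]) (by decide)) <|
  .cons (adj_inl_inr_of_three (l := .ofFn ![1, 0, 0, 0]) (by decide)).symm <|
  .cons (adj_inl_inr_of_three (r := .ofFn ![1, 0, 1, 0]) (by decide)) <|
  .cons (adj_inl_inr_of_three (l := .ofFn ![0, 2, 2, 2]) (by decide)).symm <|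
  .cons (adj_inl_inr_of_three (r := .ofFn ![0, 0, 1, 1]) (by decide)) <|
  .cons (adj_inl_inr_of_three (l := .ofFn ![2, 2, 2, 2]) (by decide)).symm <|
  .cons (adj_inl_inr_of_three (r := .ofFn ![1, 0, 0, 0]) (by decide)) <|
  .cons (adj_inl_inr_of_three (l := .ofFn ![0, 0, 0, 0]) (by decide)).symm .nil

lemma octagon_isCycle : octagon.IsCycle := by
  rw [Walk.isCycle_def, Walk.isTrail_def]
  exact ⟨by decide, by simp [octagon], by decide⟩

end LambdaGraph

/-- The girth of `Λ(3,3)` is 8 and the girth of `Λ(4,3)` is at least 10. -/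
theorem lambda33_lambda43_girth :
    (LambdaGraph (ZMod 3) 3).egirth = 8 ∧ 10 ≤ (LambdaGraph (ZMod 3) 4).egirth := by
  refine ⟨le_antisymm (egirth_le_length LambdaGraph.octagon_isCycle) ?_, ?_⟩
  · refine LambdaGraph.le_egirth_of_nonbacktrackingCycle (m := 8) fun n x y hc hn => ?_
    have := hc.ne_two (by norm_num)
    have := hc.ne_three le_rfl
    omega
  · refine LambdaGraph.le_egirth_of_nonbacktrackingCycle (m := 10) fun n x y hc hn => ?_
    have := hc.ne_two (by norm_num)
    have := hc.ne_three (by norm_num)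
    have := hc.ne_four le_rfl
    omega
end

section
/- Let F₃ be the field with 3 elements and let v₁,…,v₆, u₁,…,u₆ ∈ F₃^* satisfy: Σv_i = 0, Σu_i = 0, Σ_{k=2}^6 y_k u_k = 0, and Σ_{k=2}^6 y_k² u_k = 0, where y_k = v₁+⋯+v_{k−1}. Then (u₁,v₁,…,u₆,v₆) has one of the following five forms for some a,b,c,r ∈ F₃^*: (a,r,b,−r,a,r,b,−r,a,r,b,−r); (a,r,b,−r,−a,−r,c,−r,−b,r,−c,r); (a,r,b,r,c,−r,−b,−r,−a,−r,−c,r); (a,r,b,r,c,r,−a,−r,−c,−r,−b,−r); or (a,r,b,r,c,r,−a,r,−b,r,−c,r). -/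
/-!
The moment conditions say that `u` is orthogonal to `1`, `y` and `y²`; over `𝔽₃` these span all
functions of `y`, since `[x = t] = 1 - (x - t)²`. Hence the `u_k` sum to zero over every level set
of the closed walk `y₁ = 0, y₂, …, y₆` with steps `v_k = ±r`. As each `u_k ≠ 0`, no vertex is
visited exactly once, which leaves five walks (a finite check). Their level sets have two or three
elements, and two or three nonzero elements of `𝔽₃` sum to zero only if they are `a, -a` or
`a, a, a`; this gives the relations between the `u_k` in the five forms.
-/

open Finset

namespace ZMod

theorem ite_eq_one_sub_sub_sq (x t : ZMod 3) : (if x = t then 1 else 0) = 1 - (x - t) ^ 2 := by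
  revert x t
  decide

theorem eq_and_eq_of_add_add_eq_zero {a b c : ZMod 3} (ha : a ≠ 0) (hb : b ≠ 0) (hc : c ≠ 0)
    (h : a + b + c = 0) : b = a ∧ c = a := by
  revert a b c
  decide

end ZMod

theorem sum_filter_eq_zero_of_moments {ι : Type*} {s : Finset ι} {y u : ι → ZMod 3}
    (h₀ : ∑ i ∈ s, u i = 0) (h₁ : ∑ i ∈ s, y i * u i = 0) (h₂ : ∑ i ∈ s, y i ^ 2 * u i = 0)
    (t : ZMod 3) : ∑ i ∈ s with y i = t, u i = 0 :=
  calc ∑ i ∈ s with y i = t, u i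
      = ∑ i ∈ s, ((1 - t ^ 2) * u i + 2 * t * (y i * u i) - y i ^ 2 * u i) := by
        rw [sum_filter]
        refine sum_congr rfl fun i _ => ?_
        rw [← boole_mul, ZMod.ite_eq_one_sub_sub_sq]
        ring
    _ = (1 - t ^ 2) * ∑ i ∈ s, u i + 2 * t * ∑ i ∈ s, y i * u i - ∑ i ∈ s, y i ^ 2 * u i := by
        simp only [sum_sub_distrib, sum_add_distrib, mul_sum]
    _ = 0 := by rw [h₀, h₁, h₂]; ring

theorem exists_ne_eq_of_sum_filter_eq_zero {ι β M : Type*} [AddCommMonoid M] [DecidableEq β]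
    {s : Finset ι} {y : ι → β} {u : ι → M} (h : ∀ t, ∑ i ∈ s with y i = t, u i = 0) {i : ι}
    (hi : i ∈ s) (hu : u i ≠ 0) : ∃ j ∈ s, j ≠ i ∧ y j = y i := by
  by_contra! hne
  have hsingle : ∑ j ∈ s with y j = y i, u j = u i :=
    sum_eq_single_of_mem i (mem_filter.2 ⟨hi, rfl⟩) fun j hj hji =>
      absurd (mem_filter.1 hj).2 (hne j (mem_filter.1 hj).1 hji)
  exact hu (hsingle.symm.trans (h (y i)))

theorem sum_filter_eq_zero_of_eq_mul {ι R M : Type*} [MonoidWithZero R] [IsLeftCancelMulZero R] [DecidableEq R]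
    [AddCommMonoid M] {s : Finset ι} {y q : ι → R} {u : ι → M} {r : R} (hr : r ≠ 0)
    (hy : ∀ i, y i = r * q i) (h : ∀ t, ∑ i ∈ s with y i = t, u i = 0) (t : R) :
    ∑ i ∈ s with q i = t, u i = 0 := by
  simpa [hy, mul_right_inj' hr] using h (r * t)

def walkPositions {R : Type*} [AddCommMonoid R] (a b c d e : R) : Fin 6 → R :=
  ![0, a, a + b, a + b + c, a + b + c + d, a + b + c + d + e]

/-- In each case the walk is `a` times a walk in `{0, 1, 2}`, whose level sets can be read off. -/
theorem closedWalk_cases {a b c d e f : ZMod 3} (ha : a ≠ 0) (hb : b ≠ 0) (hc : c ≠ 0)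
    (hd : d ≠ 0) (he : e ≠ 0) (hf : f ≠ 0) (hclosed : a + b + c + d + e + f = 0)
    (hvisit : ∀ i, ∃ j ≠ i, walkPositions a b c d e j = walkPositions a b c d e i) :
    (b = -a ∧ c = a ∧ d = -a ∧ e = a ∧ f = -a ∧
      ∀ i, walkPositions a b c d e i = a * ![0, 1, 0, 1, 0, 1] i) ∨
    (b = -a ∧ c = -a ∧ d = -a ∧ e = a ∧ f = a ∧
      ∀ i, walkPositions a b c d e i = a * ![0, 1, 0, 2, 1, 2] i) ∨
    (b = a ∧ c = -a ∧ d = -a ∧ e = -a ∧ f = a ∧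
      ∀ i, walkPositions a b c d e i = a * ![0, 1, 2, 1, 0, 2] i) ∨
    (b = a ∧ c = a ∧ d = -a ∧ e = -a ∧ f = -a ∧
      ∀ i, walkPositions a b c d e i = a * ![0, 1, 2, 0, 2, 1] i) ∨
    (b = a ∧ c = a ∧ d = a ∧ e = a ∧ f = a ∧
      ∀ i, walkPositions a b c d e i = a * ![0, 1, 2, 0, 1, 2] i) := by
  revert a b c d e f
  unfold walkPositions
  decide

def HasTwelveCycleForm (u v : ℕ → ZMod 3) : Prop :=
    (∃ a b r : ZMod 3, a ≠ 0 ∧ b ≠ 0 ∧ r ≠ 0 ∧ u 1 = a ∧ v 1 = r ∧ u 2 = b ∧ v 2 = -r ∧ u 3 = a ∧ v 3 = r ∧ u 4 = b ∧ v 4 = -r ∧ u 5 = a ∧ v 5 = r ∧ u 6 = b ∧ v 6 = -r) ∨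
      (∃ a b c r : ZMod 3, a ≠ 0 ∧ b ≠ 0 ∧ c ≠ 0 ∧ r ≠ 0 ∧ u 1 = a ∧ v 1 = r ∧ u 2 = b ∧ v 2 = -r ∧ u 3 = -a ∧ v 3 = -r ∧ u 4 = c ∧ v 4 = -r ∧ u 5 = -b ∧ v 5 = r ∧ u 6 = -c ∧ v 6 = r) ∨
      (∃ a b c r : ZMod 3, a ≠ 0 ∧ b ≠ 0 ∧ c ≠ 0 ∧ r ≠ 0 ∧ u 1 = a ∧ v 1 = r ∧ u 2 = b ∧ v 2 = r ∧ u 3 = c ∧ v 3 = -r ∧ u 4 = -b ∧ v 4 = -r ∧ u 5 = -a ∧ v 5 = -r ∧ u 6 = -c ∧ v 6 = r) ∨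
      (∃ a b c r : ZMod 3, a ≠ 0 ∧ b ≠ 0 ∧ c ≠ 0 ∧ r ≠ 0 ∧ u 1 = a ∧ v 1 = r ∧ u 2 = b ∧ v 2 = r ∧ u 3 = c ∧ v 3 = r ∧ u 4 = -a ∧ v 4 = -r ∧ u 5 = -c ∧ v 5 = -r ∧ u 6 = -b ∧ v 6 = -r) ∨
      (∃ a b c r : ZMod 3, a ≠ 0 ∧ b ≠ 0 ∧ c ≠ 0 ∧ r ≠ 0 ∧ u 1 = a ∧ v 1 = r ∧ u 2 = b ∧ v 2 = r ∧ u 3 = c ∧ v 3 = r ∧ u 4 = -a ∧ v 4 = r ∧ u 5 = -b ∧ v 5 = r ∧ u 6 = -c ∧ v 6 = r)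

theorem hasTwelveCycleForm_of_sum_filter_eq_zero {u v : ℕ → ZMod 3}
    (hne : ∀ i, 1 ≤ i → i ≤ 6 → u i ≠ 0 ∧ v i ≠ 0)
    (hclosed : v 1 + v 2 + v 3 + v 4 + v 5 + v 6 = 0)
    (hlevel : ∀ t, ∑ i with walkPositions (v 1) (v 2) (v 3) (v 4) (v 5) i = t,
      ![u 1, u 2, u 3, u 4, u 5, u 6] i = 0) :
    HasTwelveCycleForm u v := by
  have hu : ∀ i : Fin 6, u (i + 1) ≠ 0 := fun i => (hne _ (by omega) (by omega)).1
  have hv : ∀ i : Fin 6, v (i + 1) ≠ 0 := fun i => (hne _ (by omega) (by omega)).2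
  have hvisit : ∀ i, ∃ j ≠ i, walkPositions (v 1) (v 2) (v 3) (v 4) (v 5) j =
      walkPositions (v 1) (v 2) (v 3) (v 4) (v 5) i := by
    intro i
    have hui : ![u 1, u 2, u 3, u 4, u 5, u 6] i ≠ 0 := by
      fin_cases i
      exacts [hu 0, hu 1, hu 2, hu 3, hu 4, hu 5]
    simpa using exists_ne_eq_of_sum_filter_eq_zero hlevel (mem_univ i) hui
  rcases closedWalk_cases (hv 0) (hv 1) (hv 2) (hv 3) (hv 4) (hv 5) hclosed hvisit with
    ⟨h₂, h₃, h₄, h₅, h₆, hq⟩ | ⟨h₂, h₃, h₄, h₅, h₆, hq⟩ | ⟨h₂, h₃, h₄, h₅, h₆, hq⟩ |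
    ⟨h₂, h₃, h₄, h₅, h₆, hq⟩ | ⟨h₂, h₃, h₄, h₅, h₆, hq⟩ <;>
  have l₀ := sum_filter_eq_zero_of_eq_mul (hv 0) hq hlevel 0 <;>
  have l₁ := sum_filter_eq_zero_of_eq_mul (hv 0) hq hlevel 1 <;>
  have l₂ := sum_filter_eq_zero_of_eq_mul (hv 0) hq hlevel 2 <;>
  simp +decide only [sum_filter, Fin.sum_univ_six, Fin.isValue, ↓reduceIte, Matrix.cons_val_zero,
    Matrix.cons_val_one, Matrix.cons_val, add_zero, zero_add] at l₀ l₁ l₂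
  · obtain ⟨h₃', h₅'⟩ := ZMod.eq_and_eq_of_add_add_eq_zero (hu 0) (hu 2) (hu 4) l₀
    obtain ⟨h₄', h₆'⟩ := ZMod.eq_and_eq_of_add_add_eq_zero (hu 1) (hu 3) (hu 5) l₁
    exact Or.inl ⟨u 1, u 2, v 1, hu 0, hu 1, hv 0, rfl, rfl, rfl, h₂, h₃', h₃, h₄', h₄, h₅', h₅,
      h₆', h₆⟩
  · exact Or.inr <| Or.inl ⟨u 1, u 2, u 4, v 1, hu 0, hu 1, hu 3, hv 0, rfl, rfl, rfl, h₂,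
      eq_neg_of_add_eq_zero_right l₀, h₃, rfl, h₄, eq_neg_of_add_eq_zero_right l₁, h₅,
      eq_neg_of_add_eq_zero_right l₂, h₆⟩
  · exact Or.inr <| Or.inr <| Or.inl ⟨u 1, u 2, u 3, v 1, hu 0, hu 1, hu 2, hv 0, rfl, rfl, rfl,
      h₂, rfl, h₃, eq_neg_of_add_eq_zero_right l₁, h₄, eq_neg_of_add_eq_zero_right l₀, h₅,
      eq_neg_of_add_eq_zero_right l₂, h₆⟩
  · exact Or.inr <| Or.inr <| Or.inr <| Or.inl ⟨u 1, u 2, u 3, v 1, hu 0, hu 1, hu 2, hv 0, rfl,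
      rfl, rfl, h₂, rfl, h₃, eq_neg_of_add_eq_zero_right l₀, h₄, eq_neg_of_add_eq_zero_right l₂,
      h₅, eq_neg_of_add_eq_zero_right l₁, h₆⟩
  · exact Or.inr <| Or.inr <| Or.inr <| Or.inr ⟨u 1, u 2, u 3, v 1, hu 0, hu 1, hu 2, hv 0, rfl,
      rfl, rfl, h₂, rfl, h₃, eq_neg_of_add_eq_zero_right l₀, h₄, eq_neg_of_add_eq_zero_right l₁,
      h₅, eq_neg_of_add_eq_zero_right l₂, h₆⟩

/-- Lemma 6 (only-if direction): any tuple over `F₃^*` satisfying the 12-cycle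
conditions (75)–(78) for `Λ(3,3)` has one of the five listed forms. -/
theorem twelve_cycle_forms (u v y : ℕ → ZMod 3)
    (hne : ∀ i, 1 ≤ i → i ≤ 6 → u i ≠ 0 ∧ v i ≠ 0)
    (hy : ∀ k, y k = ∑ m ∈ Finset.Icc 1 (k - 1), v m)
    (hv : v 1 + v 2 + v 3 + v 4 + v 5 + v 6 = 0)
    (hu : u 1 + u 2 + u 3 + u 4 + u 5 + u 6 = 0)
    (h1 : ∑ k ∈ Finset.Icc 2 6, y k * u k = 0)
    (h2 : ∑ k ∈ Finset.Icc 2 6, y k ^ 2 * u k = 0) :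
    (∃ a b r : ZMod 3, a ≠ 0 ∧ b ≠ 0 ∧ r ≠ 0 ∧ u 1 = a ∧ v 1 = r ∧ u 2 = b ∧ v 2 = -r ∧ u 3 = a ∧ v 3 = r ∧ u 4 = b ∧ v 4 = -r ∧ u 5 = a ∧ v 5 = r ∧ u 6 = b ∧ v 6 = -r) ∨
      (∃ a b c r : ZMod 3, a ≠ 0 ∧ b ≠ 0 ∧ c ≠ 0 ∧ r ≠ 0 ∧ u 1 = a ∧ v 1 = r ∧ u 2 = b ∧ v 2 = -r ∧ u 3 = -a ∧ v 3 = -r ∧ u 4 = c ∧ v 4 = -r ∧ u 5 = -b ∧ v 5 = r ∧ u 6 = -c ∧ v 6 = r) ∨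
      (∃ a b c r : ZMod 3, a ≠ 0 ∧ b ≠ 0 ∧ c ≠ 0 ∧ r ≠ 0 ∧ u 1 = a ∧ v 1 = r ∧ u 2 = b ∧ v 2 = r ∧ u 3 = c ∧ v 3 = -r ∧ u 4 = -b ∧ v 4 = -r ∧ u 5 = -a ∧ v 5 = -r ∧ u 6 = -c ∧ v 6 = r) ∨
      (∃ a b c r : ZMod 3, a ≠ 0 ∧ b ≠ 0 ∧ c ≠ 0 ∧ r ≠ 0 ∧ u 1 = a ∧ v 1 = r ∧ u 2 = b ∧ v 2 = r ∧ u 3 = c ∧ v 3 = r ∧ u 4 = -a ∧ v 4 = -r ∧ u 5 = -c ∧ v 5 = -r ∧ u 6 = -b ∧ v 6 = -r) ∨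
      (∃ a b c r : ZMod 3, a ≠ 0 ∧ b ≠ 0 ∧ c ≠ 0 ∧ r ≠ 0 ∧ u 1 = a ∧ v 1 = r ∧ u 2 = b ∧ v 2 = r ∧ u 3 = c ∧ v 3 = r ∧ u 4 = -a ∧ v 4 = r ∧ u 5 = -b ∧ v 5 = r ∧ u 6 = -c ∧ v 6 = r) := by
  simp only [hy, Nat.reduceAdd, Nat.reduceLeDiff, sum_Icc_succ_top, Icc_self, sum_singleton,
    Nat.add_one_sub_one, Nat.one_le_ofNat] at h1 h2
  refine hasTwelveCycleForm_of_sum_filter_eq_zero hne hv (sum_filter_eq_zero_of_moments ?_ ?_ ?_)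
  · simpa [Fin.sum_univ_six] using hu
  all_goals simp only [Fin.sum_univ_six, walkPositions, Fin.isValue, Matrix.cons_val_zero,
    Matrix.cons_val_one, Matrix.cons_val, zero_mul, zero_add]
  · linear_combination h1
  · linear_combination h2
end

section
/- Let a,b,c,r ∈ F₃^* and suppose (u₁,v₁,…,u₆,v₆) = (a,r,b,r,c,r,−a,r,−b,r,−c,r). Let x_k = u₁+⋯+u_{k−1}. Then Δ₄ := x₂²v₁ + x₃²v₂ + x₄²v₃ + x₅²v₄ + x₆²v₅ = r(ab + bc − ac), and Δ₄ = 0 holds in F₃ if and only if a = c = −b. -/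
/-!
The partial sums of `(a, b, c, -a, -b)` are `a, a + b, a + b + c, b + c, c`, so `Δ₄ / r` is the
sum of their squares, which equals `3 (a² + b² + c² + ab + bc + ca) + ab + bc - ac`. In `F₃` the
nonzero elements are `±1`; if `c = -a` the form `ab + bc - ac` is `a² = 1`, and if `c = a` it is
`2ab - 1 = -(ab + 1)`, which vanishes exactly when `b = -a`.
-/

open Finset

lemma partialSum_succ {M : Type*} [AddCommMonoid M] {u x : ℕ → M}
    (hx : ∀ k, x k = ∑ m ∈ Icc 1 (k - 1), u m) {k : ℕ} (hk : 1 ≤ k) :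
    x (k + 1) = x k + u k := by
  obtain ⟨j, rfl⟩ := Nat.exists_eq_add_of_le' hk
  rw [hx, hx, Nat.add_sub_cancel, Nat.add_sub_cancel, sum_Icc_succ_top (by omega)]

lemma sq_partialSums_mul_eq_of_charP_three {R : Type*} [CommRing R] [CharP R 3] (a b c r : R) :
    a ^ 2 * r + (a + b) ^ 2 * r + (a + b + c) ^ 2 * r + (b + c) ^ 2 * r + c ^ 2 * r
      = r * (a * b + b * c - a * c) := by
  have h3 : (3 : R) = 0 := CharP.cast_eq_zero R 3
  linear_combination r * (a ^ 2 + b ^ 2 + c ^ 2 + a * b + b * c + a * c) * h3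

lemma ZMod.mul_add_mul_sub_mul_eq_zero_iff_of_ne_zero {a b c : ZMod 3}
    (ha : a ≠ 0) (hb : b ≠ 0) (hc : c ≠ 0) :
    a * b + b * c - a * c = 0 ↔ a = c ∧ c = -b := by
  revert a b c
  decide

/-- For the tuple `(a,r,b,r,c,r,-a,r,-b,r,-c,r)` over `F₃^*`, the obstruction
`Δ₄ = x₂²v₁ + x₃²v₂ + x₄²v₃ + x₅²v₄ + x₆²v₅` equals `r(ab + bc - ac)`, and it
vanishes in `F₃` if and only if `a = c = -b`. -/
theorem delta4_value (a b c r : ZMod 3)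
    (ha : a ≠ 0) (hb : b ≠ 0) (hc : c ≠ 0) (hr : r ≠ 0)
    (u v x : ℕ → ZMod 3)
    (hx : ∀ k, x k = ∑ m ∈ Finset.Icc 1 (k - 1), u m)
    (h : u 1 = a ∧ v 1 = r ∧ u 2 = b ∧ v 2 = r ∧ u 3 = c ∧ v 3 = r ∧
      u 4 = -a ∧ v 4 = r ∧ u 5 = -b ∧ v 5 = r ∧ u 6 = -c ∧ v 6 = r) :
    (x 2 ^ 2 * v 1 + x 3 ^ 2 * v 2 + x 4 ^ 2 * v 3 + x 5 ^ 2 * v 4 + x 6 ^ 2 * v 5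
        = r * (a * b + b * c - a * c)) ∧
    (x 2 ^ 2 * v 1 + x 3 ^ 2 * v 2 + x 4 ^ 2 * v 3 + x 5 ^ 2 * v 4 + x 6 ^ 2 * v 5 = 0
        ↔ a = c ∧ c = -b) := by
  obtain ⟨hu1, hv1, hu2, hv2, hu3, hv3, hu4, hv4, hu5, hv5, -, -⟩ := h
  have hx1 : x 1 = 0 := by simp [hx]
  have hx2 : x 2 = a := by rw [partialSum_succ hx le_rfl, hx1, hu1, zero_add]
  have hx3 : x 3 = a + b := by rw [partialSum_succ hx (by norm_num), hx2, hu2]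
  have hx4 : x 4 = a + b + c := by rw [partialSum_succ hx (by norm_num), hx3, hu3]
  have hx5 : x 5 = b + c := by rw [partialSum_succ hx (by norm_num), hx4, hu4]; ring
  have hx6 : x 6 = c := by rw [partialSum_succ hx (by norm_num), hx5, hu5]; ring
  have hΔ : x 2 ^ 2 * v 1 + x 3 ^ 2 * v 2 + x 4 ^ 2 * v 3 + x 5 ^ 2 * v 4 + x 6 ^ 2 * v 5
      = r * (a * b + b * c - a * c) := by
    rw [hx2, hx3, hx4, hx5, hx6, hv1, hv2, hv3, hv4, hv5]
    exact sq_partialSums_mul_eq_of_charP_three a b c r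
  refine ⟨hΔ, ?_⟩
  rw [hΔ, mul_eq_zero, or_iff_right hr]
  exact ZMod.mul_add_mul_sub_mul_eq_zero_iff_of_ne_zero ha hb hc
end

section
/- Let u₁,v₁,…,u₆,v₆ ∈ F₃^*. The graph Λ_{8,3} has a cycle of type (u₁,v₁,…,u₆,v₆) (a 12-cycle through the doubly-zero edge with these color differences) if and only if there exist a, c ∈ F₃^* with (u₁,v₁,…,u₆,v₆) = (a,c,−a,−c,a,c,−a,−c,a,c,−a,−c). -/
/-- `hasCycleOfType F k n u v` : the graph `Λ(k,q)` has a cycle of length `2n` of type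
`(u 1, v 1, …, u n, v n)`, i.e. a `2n`-cycle starting with the all-zero left vertex and the
all-zero right vertex, whose left colors `x i` and right colors `y i` have successive
differences `u i = x (i+1) - x i` and `v i = y (i+1) - y i`. -/
def hasCycleOfType (F : Type*) [Field F] (k n : ℕ) (u v : ℕ → F) : Prop :=
  ∃ L R : ℕ → PVec F k,
    (∀ m, (L 1).1 m = 0) ∧ (∀ m, (R 1).1 m = 0) ∧
    L (n + 1) = L 1 ∧ R (n + 1) = R 1 ∧
    (∀ i, 1 ≤ i → i ≤ n → (LambdaGraph F k).Adj (Sum.inl (L i)) (Sum.inr (R i))) ∧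
    (∀ i, 1 ≤ i → i ≤ n → (LambdaGraph F k).Adj (Sum.inr (R i)) (Sum.inl (L (i + 1)))) ∧
    (∀ i j, 1 ≤ i → i < j → j ≤ n → L i ≠ L j) ∧
    (∀ i j, 1 ≤ i → i < j → j ≤ n → R i ≠ R j) ∧
    (∀ i, 1 ≤ i → i ≤ n → u i = (L (i + 1)).1 0 - (L i).1 0) ∧
    (∀ i, 1 ≤ i → i ≤ n → v i = (R (i + 1)).1 0 - (R i).1 0)

theorem PVec.ext_of_forall_le {F : Type*} [Zero F] {k : ℕ} {a b : PVec F k}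
    (h : ∀ m ≤ k, a.1 m = b.1 m) : a = b :=
  Subtype.ext <| funext fun m =>
    if hm : m ≤ k then h m hm else by rw [a.2 m (by omega), b.2 m (by omega)]

namespace LambdaGraph

variable {F : Type*}

section AddCommGroup
variable [AddCommGroup F]

/-- The colours `x i` (`i ≥ 1`) of a cycle of type `u`, normalised by `x 1 = 0`. -/
def typeColors (u : ℕ → F) : ℕ → F
  | 0 | 1 => 0
  | i + 2 => typeColors u (i + 1) + u (i + 1)

theorem typeColors_succ (u : ℕ → F) {i : ℕ} (hi : 1 ≤ i) :
    typeColors u (i + 1) = typeColors u i + u i := by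
  obtain ⟨i, rfl⟩ := Nat.exists_eq_add_of_le' hi
  rfl

theorem eq_typeColors {n : ℕ} {c u : ℕ → F} (h₁ : c 1 = 0)
    (hu : ∀ i, 1 ≤ i → i ≤ n → u i = c (i + 1) - c i) :
    ∀ i, 1 ≤ i → i ≤ n + 1 → c i = typeColors u i := by
  intro i h1 hi
  induction i, h1 using Nat.le_induction with
  | base => exact h₁
  | succ i h1 ih => rw [typeColors_succ u h1, ← ih (by omega), hu i h1 (by omega)]; abel

end AddCommGroup

section Ring
variable [Ring F]

def rightNbr (k : ℕ) (l : ℕ → F) (y : F) : ℕ → F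
  | 0 => y
  | 1 => 0
  | i + 2 => if k < i + 2 then 0 else
      (if (i + 2) % 4 = 2 ∨ (i + 2) % 4 = 3 then y * l i else l 0 * rightNbr k l y i) - l (i + 2)

def leftNbr (k : ℕ) (r : ℕ → F) (x : F) : ℕ → F
  | 0 => x
  | 1 => if k < 2 then 0 else r 0 * x - r 2 -- left vertices have `l 1 = l 2`
  | i + 2 => if k < i + 2 then 0 else
      (if (i + 2) % 4 = 2 ∨ (i + 2) % 4 = 3 then r 0 * leftNbr k r x i else x * r i) - r (i + 2)

theorem rightNbr_eq_zero_of_lt {k i : ℕ} (l : ℕ → F) (y : F) (h : k < i) :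
    rightNbr k l y i = 0 := by
  match i with
  | 1 => rfl
  | i + 2 => exact if_pos h

theorem leftNbr_eq_zero_of_lt {k i : ℕ} (r : ℕ → F) (x : F) (h : k < i) :
    leftNbr k r x i = 0 := by
  match i with
  | 1 => exact if_pos (by omega)
  | i + 2 => exact if_pos h

theorem leftNbr_one (k : ℕ) (r : ℕ → F) (x : F) : leftNbr k r x 1 = leftNbr k r x 2 := by
  simp [leftNbr]

theorem rightNbr_zero (k : ℕ) : rightNbr k (0 : ℕ → F) 0 = 0 := by
  funext m
  match m with
  | 0 | 1 => rfl
  | i + 2 => simp [rightNbr]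

/-- The `i`-th left vertex (`i ≥ 1`) of the walk from the zero vertex with left colours `x`
and right colours `y`. -/
def walkL (k : ℕ) (x y : ℕ → F) : ℕ → ℕ → F
  | 0 | 1 => 0
  | i + 2 => leftNbr k (rightNbr k (walkL k x y (i + 1)) (y (i + 1))) (x (i + 2))

def walkR (k : ℕ) (x y : ℕ → F) (i : ℕ) : ℕ → F := rightNbr k (walkL k x y i) (y i)

variable {k : ℕ} {x y : ℕ → F}

theorem walkL_succ {i : ℕ} (hi : 1 ≤ i) :
    walkL k x y (i + 1) = leftNbr k (walkR k x y i) (x (i + 1)) := by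
  obtain ⟨i, rfl⟩ := Nat.exists_eq_add_of_le' hi
  rfl

theorem walkL_apply_zero (h₀ : x 0 = 0) (h₁ : x 1 = 0) (i : ℕ) : walkL k x y i 0 = x i := by
  match i with
  | 0 => exact h₀.symm
  | 1 => exact h₁.symm
  | _ + 2 => rfl

theorem walkL_apply_one (i : ℕ) : walkL k x y i 1 = walkL k x y i 2 := by
  match i with
  | 0 | 1 => rfl
  | _ + 2 => exact leftNbr_one ..

theorem walkL_eq_zero_of_lt {i m : ℕ} (h : k < m) : walkL k x y i m = 0 := by
  match i with
  | 0 | 1 => rfl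
  | _ + 2 => exact leftNbr_eq_zero_of_lt _ _ h

theorem walkR_eq_zero_of_lt {i m : ℕ} (h : k < m) : walkR k x y i m = 0 :=
  rightNbr_eq_zero_of_lt _ _ h

/-- The walk closes up after `n` steps (the right colours returning to `0` as well) without
repeated vertices; stated with bounded quantifiers so that it is decidable. -/
def IsCycleWalk (k n : ℕ) (x y : ℕ → F) : Prop :=
  y (n + 1) = 0 ∧ (∀ m ≤ k, walkL k x y (n + 1) m = 0) ∧
    (∀ j ≤ n, ∀ i < j, 1 ≤ i → ¬ ∀ m ≤ k, walkL k x y i m = walkL k x y j m) ∧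
    (∀ j ≤ n, ∀ i < j, 1 ≤ i → ¬ ∀ m ≤ k, walkR k x y i m = walkR k x y j m)

instance [DecidableEq F] (k n : ℕ) (x y : ℕ → F) : Decidable (IsCycleWalk k n x y) :=
  inferInstanceAs (Decidable (_ ∧ _ ∧ _ ∧ _))

end Ring

section Field
variable [Field F] {k : ℕ}

theorem lamAdjLR_rightNbr {l : ℕ → F} (hl : l 1 = l 2) (y : F) :
    lamAdjLR k l (rightNbr k l y) := by
  refine ⟨hl, rfl, fun i h2 hk => ?_⟩
  obtain ⟨i, rfl⟩ := Nat.exists_eq_add_of_le' h2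
  simp only [rightNbr, if_neg (not_lt.2 hk), Nat.add_sub_cancel]
  constructor
  · intro hc; rw [if_pos hc]; abel
  · intro hc; rw [if_neg (by omega)]; abel

theorem lamAdjLR_leftNbr {r : ℕ → F} (hr : r 1 = 0) (x : F) :
    lamAdjLR k (leftNbr k r x) r := by
  refine ⟨leftNbr_one k r x, hr, fun i h2 hk => ?_⟩
  obtain ⟨i, rfl⟩ := Nat.exists_eq_add_of_le' h2
  simp only [leftNbr, if_neg (not_lt.2 hk), Nat.add_sub_cancel]
  constructor
  · intro hc; rw [if_pos hc]; abel
  · intro hc; rw [if_neg (by omega)]; abel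

theorem eq_rightNbr_of_lamAdjLR {l r : ℕ → F} (h : lamAdjLR k l r)
    (hr : ∀ i, k < i → r i = 0) : r = rightNbr k l (r 0) := by
  funext i
  induction i using Nat.strong_induction_on with
  | _ i ih =>
    match i with
    | 0 => rfl
    | 1 => exact h.2.1
    | i + 2 =>
      rw [rightNbr]
      split_ifs with hk hc
      · exact hr _ hk
      · have e := (h.2.2 (i + 2) (by omega) (by omega)).1 hc
        rw [Nat.add_sub_cancel] at e
        rw [← e]; abel
      · have e := (h.2.2 (i + 2) (by omega) (by omega)).2 (by omega)
        rw [Nat.add_sub_cancel, ih i (by omega)] at e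
        rw [← e]; abel

theorem eq_leftNbr_of_lamAdjLR {l r : ℕ → F} (h : lamAdjLR k l r)
    (hl : ∀ i, k < i → l i = 0) : l = leftNbr k r (l 0) := by
  funext i
  induction i using Nat.strong_induction_on with
  | _ i ih =>
    match i with
    | 0 => rfl
    | 1 =>
      rw [leftNbr, h.1]
      split_ifs with hk
      · exact hl 2 hk
      · have e := (h.2.2 2 le_rfl (by omega)).1 (by norm_num)
        rw [← e]; abel
    | i + 2 =>
      rw [leftNbr]
      split_ifs with hk hc
      · exact hl _ hk
      · have e := (h.2.2 (i + 2) (by omega) (by omega)).1 hc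
        rw [Nat.add_sub_cancel, ih i (by omega)] at e
        rw [← e]; abel
      · have e := (h.2.2 (i + 2) (by omega) (by omega)).2 (by omega)
        rw [Nat.add_sub_cancel] at e
        rw [← e]; abel

section Cycle
variable {n : ℕ} {L R : ℕ → PVec F k} {x y : ℕ → F}

theorem walkL_eq_of_cycle (hL₁ : ∀ m, (L 1).1 m = 0)
    (hLR : ∀ i, 1 ≤ i → i ≤ n → lamAdjLR k (L i).1 (R i).1)
    (hRL : ∀ i, 1 ≤ i → i ≤ n → lamAdjLR k (L (i + 1)).1 (R i).1)
    (hx : ∀ i, 2 ≤ i → i ≤ n + 1 → (L i).1 0 = x i)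
    (hy : ∀ i, 1 ≤ i → i ≤ n → (R i).1 0 = y i) :
    ∀ i, 1 ≤ i → i ≤ n + 1 → (L i).1 = walkL k x y i := by
  intro i h1 hi
  induction i, h1 using Nat.le_induction with
  | base => exact funext hL₁
  | succ i h1 ih =>
    have hR : (R i).1 = walkR k x y i := by
      rw [eq_rightNbr_of_lamAdjLR (hLR i h1 (by omega)) (R i).2, hy i h1 (by omega),
        ih (by omega), walkR]
    rw [walkL_succ h1, ← hR, ← hx (i + 1) (by omega) hi]
    exact eq_leftNbr_of_lamAdjLR (hRL i h1 (by omega)) (L (i + 1)).2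

theorem walkR_eq_of_cycle (hL₁ : ∀ m, (L 1).1 m = 0)
    (hLR : ∀ i, 1 ≤ i → i ≤ n → lamAdjLR k (L i).1 (R i).1)
    (hRL : ∀ i, 1 ≤ i → i ≤ n → lamAdjLR k (L (i + 1)).1 (R i).1)
    (hx : ∀ i, 2 ≤ i → i ≤ n + 1 → (L i).1 0 = x i)
    (hy : ∀ i, 1 ≤ i → i ≤ n → (R i).1 0 = y i) :
    ∀ i, 1 ≤ i → i ≤ n → (R i).1 = walkR k x y i := fun i h1 hi => by
  rw [eq_rightNbr_of_lamAdjLR (hLR i h1 hi) (R i).2, hy i h1 hi,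
    walkL_eq_of_cycle hL₁ hLR hRL hx hy i h1 (by omega), walkR]

end Cycle

theorem isCycleWalk_of_hasCycleOfType {n : ℕ} {u v : ℕ → F} (h : hasCycleOfType F k n u v) :
    IsCycleWalk k n (typeColors u) (typeColors v) := by
  obtain ⟨L, R, hL₁, hR₁, hL, hR, hLR, hRL, hLinj, hRinj, hu, hv⟩ := h
  have hx := eq_typeColors (c := fun i => (L i).1 0) (hL₁ 0) hu
  have hy := eq_typeColors (c := fun i => (R i).1 0) (hR₁ 0) hv
  have hLw := walkL_eq_of_cycle hL₁ hLR hRL (fun i h2 hi => hx i (by omega) hi)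
    (fun i h1 hi => hy i h1 (by omega))
  have hRw := walkR_eq_of_cycle hL₁ hLR hRL (fun i h2 hi => hx i (by omega) hi)
    (fun i h1 hi => hy i h1 (by omega))
  refine ⟨?_, fun m _ => ?_, fun j hj i hij hi heq => ?_, fun j hj i hij hi heq => ?_⟩
  · rw [← hy (n + 1) (by omega) le_rfl, hR, hR₁]
  · rw [← hLw (n + 1) (by omega) le_rfl, hL, hL₁]
  · refine hLinj i j hi hij hj (PVec.ext_of_forall_le fun m hm => ?_)
    rw [hLw i hi (by omega), hLw j (by omega) (by omega)]
    exact heq m hm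
  · refine hRinj i j hi hij hj (PVec.ext_of_forall_le fun m hm => ?_)
    rw [hRw i hi (by omega), hRw j (by omega) hj]
    exact heq m hm

theorem hasCycleOfType_of_isCycleWalk {n : ℕ} {u v : ℕ → F}
    (h : IsCycleWalk k n (typeColors u) (typeColors v)) : hasCycleOfType F k n u v := by
  set x := typeColors u with hx
  set y := typeColors v with hy
  obtain ⟨hy₁, hclosed, hLinj, hRinj⟩ := h
  have hL : walkL k x y (n + 1) = walkL k x y 1 := funext fun m =>
    if hm : m ≤ k then hclosed m hm else walkL_eq_zero_of_lt (by omega)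
  refine ⟨fun i => ⟨walkL k x y i, fun _ => walkL_eq_zero_of_lt⟩,
    fun i => ⟨walkR k x y i, fun _ => walkR_eq_zero_of_lt⟩,
    fun m => rfl, fun m => congrFun (rightNbr_zero k) m, Subtype.ext hL,
    Subtype.ext ?_, fun i _ _ => ?_, fun i hi _ => ?_,
    fun i j hi hij hj heq => ?_, fun i j hi hij hj heq => ?_, fun i hi _ => ?_,
    fun i hi _ => ?_⟩
  · show rightNbr k (walkL k x y (n + 1)) (y (n + 1)) = rightNbr k (walkL k x y 1) (y 1)
    rw [hL, hy₁]
    rfl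
  · exact lamAdjLR_rightNbr (walkL_apply_one i) _
  · show lamAdjLR k (walkL k x y (i + 1)) (walkR k x y i)
    rw [walkL_succ hi]
    exact lamAdjLR_leftNbr rfl _
  · exact hLinj j hj i hij hi fun m _ => congrFun (congrArg Subtype.val heq) m
  · exact hRinj j hj i hij hi fun m _ => congrFun (congrArg Subtype.val heq) m
  · show u i = walkL k x y (i + 1) 0 - walkL k x y i 0
    rw [walkL_apply_zero (x := x) rfl rfl, walkL_apply_zero (x := x) rfl rfl, hx,
      typeColors_succ u hi, add_sub_cancel_left]
  · show v i = y (i + 1) - y i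
    rw [hy, typeColors_succ v hi, add_sub_cancel_left]

theorem hasCycleOfType_iff_isCycleWalk {n : ℕ} {u v : ℕ → F} :
    hasCycleOfType F k n u v ↔ IsCycleWalk k n (typeColors u) (typeColors v) :=
  ⟨isCycleWalk_of_hasCycleOfType, hasCycleOfType_of_isCycleWalk⟩

theorem hasCycleOfType_congr {n : ℕ} {u u' v v' : ℕ → F}
    (hu : ∀ i, 1 ≤ i → i ≤ n → u i = u' i) (hv : ∀ i, 1 ≤ i → i ≤ n → v i = v' i) :
    hasCycleOfType F k n u v ↔ hasCycleOfType F k n u' v' := by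
  have agree : ∀ {w w' : ℕ → F}, (∀ i, 1 ≤ i → i ≤ n → w i = w' i) → ∀ c : ℕ → F,
      (∀ i, 1 ≤ i → i ≤ n → w i = c i) ↔ ∀ i, 1 ≤ i → i ≤ n → w' i = c i :=
    fun h c => forall_congr' fun i => forall_congr' fun h1 => forall_congr' fun hn => by
      rw [h i h1 hn]
  unfold hasCycleOfType
  simp only [agree hu, agree hv]

end Field

set_option synthInstance.maxSize 100000 in
theorem isCycleWalk_zmod3_iff :
    ∀ u₁ ≠ (0 : ZMod 3), ∀ v₁ ≠ (0 : ZMod 3), ∀ u₂ ≠ (0 : ZMod 3), ∀ v₂ ≠ (0 : ZMod 3),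
    ∀ u₃ ≠ (0 : ZMod 3), ∀ v₃ ≠ (0 : ZMod 3), ∀ u₄ ≠ (0 : ZMod 3), ∀ v₄ ≠ (0 : ZMod 3),
    ∀ u₅ ≠ (0 : ZMod 3), ∀ v₅ ≠ (0 : ZMod 3), ∀ u₆ ≠ (0 : ZMod 3), ∀ v₆ ≠ (0 : ZMod 3),
    (IsCycleWalk 8 6 (typeColors fun i => [0, u₁, u₂, u₃, u₄, u₅, u₆].getD i 0)
        (typeColors fun i => [0, v₁, v₂, v₃, v₄, v₅, v₆].getD i 0) ↔
      ∃ a c : ZMod 3, a ≠ 0 ∧ c ≠ 0 ∧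
        u₁ = a ∧ v₁ = c ∧ u₂ = -a ∧ v₂ = -c ∧ u₃ = a ∧ v₃ = c ∧
        u₄ = -a ∧ v₄ = -c ∧ u₅ = a ∧ v₅ = c ∧ u₆ = -a ∧ v₆ = -c) := by
  decide +kernel

end LambdaGraph

/-- Characterization of the 12-cycles (of given type) of `Λ(8,3)` through the edge
joining the two all-zero vertices. -/
theorem lambda83_cycle_type_iff (u v : ℕ → ZMod 3)
    (hne : ∀ i, 1 ≤ i → i ≤ 6 → u i ≠ 0 ∧ v i ≠ 0) :
    hasCycleOfType (ZMod 3) 8 6 u v ↔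
      ∃ a c : ZMod 3, a ≠ 0 ∧ c ≠ 0 ∧
        u 1 = a ∧ v 1 = c ∧ u 2 = -a ∧ v 2 = -c ∧ u 3 = a ∧ v 3 = c ∧
        u 4 = -a ∧ v 4 = -c ∧ u 5 = a ∧ v 5 = c ∧ u 6 = -a ∧ v 6 = -c := by
  have hpack (w : ℕ → ZMod 3) :
      ∀ i, 1 ≤ i → i ≤ 6 → w i = [0, w 1, w 2, w 3, w 4, w 5, w 6].getD i 0 := by
    intro i h1 h6
    interval_cases i <;> rfl
  rw [LambdaGraph.hasCycleOfType_congr (hpack u) (hpack v),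
    LambdaGraph.hasCycleOfType_iff_isCycleWalk]
  obtain ⟨hu₁, hv₁⟩ := hne 1 (by norm_num) (by norm_num)
  obtain ⟨hu₂, hv₂⟩ := hne 2 (by norm_num) (by norm_num)
  obtain ⟨hu₃, hv₃⟩ := hne 3 (by norm_num) (by norm_num)
  obtain ⟨hu₄, hv₄⟩ := hne 4 (by norm_num) (by norm_num)
  obtain ⟨hu₅, hv₅⟩ := hne 5 (by norm_num) (by norm_num)
  obtain ⟨hu₆, hv₆⟩ := hne 6 (by norm_num) (by norm_num)
  exact LambdaGraph.isCycleWalk_zmod3_iff _ hu₁ _ hv₁ _ hu₂ _ hv₂ _ hu₃ _ hv₃ _ hu₄ _ hv₄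
    _ hu₅ _ hv₅ _ hu₆ _ hv₆
end
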